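/- arXiv:1304.4378 — 2 statements merged into one kernel-verified Lean document; each statement's English description precedes it below -/
import Mathlib

section
/- Let A be a synaptic algebra whose projection lattice P is centrally orthocomplete, and let h ∈ P. The following are equivalent: (i) h is invariant (h and h^⊥ are unrelated); (ii) if p ∈ P, s is a symmetry in A, and sps ≤ h, then p ≤ h; (iii) if p ∈ P and p ≼ h, then p ≤ h; (iv) for all q ∈ P, q ∧ h = 0 implies q ⊥ h; (v) h is a central projection, i.e., h ∈ P ∩ C(A). -/
/-- For subsets `A, B` of a ring `R`, the commutant of `B` within `A`:
`C(B) = {x ∈ A : x b = b x for all b ∈ B}`. -/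
def SynComm {R : Type*} [Ring R] (A : Set R) (B : Set R) : Set R :=
  {x | x ∈ A ∧ ∀ b ∈ B, x * b = b * x}

/-- A synaptic algebra: a real vector subspace `A` of a real linear associative
algebra `R` with unity, satisfying axioms SA1–SA8 of Foulis.  The partial order
is recorded as a relation `le` on `R`, whose axioms are imposed on elements of
`A`; `1` is an order unit, the order is archimedean, and the norm convergence
occurring in SA8 is expressed via the order-unit characterization
`‖a‖ ≤ ε ↔ -ε•1 ≤ a ≤ ε•1`. -/
structure SynapticAlgebra (R : Type*) [Ring R] [Algebra ℝ R] where
  A : Set R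
  zero_mem : (0 : R) ∈ A
  one_mem : (1 : R) ∈ A
  add_mem : ∀ {a b : R}, a ∈ A → b ∈ A → a + b ∈ A
  smul_mem : ∀ (r : ℝ) {a : R}, a ∈ A → r • a ∈ A
  /-- the partial order on `A` (SA1) -/
  le : R → R → Prop
  le_refl : ∀ a ∈ A, le a a
  le_trans : ∀ a ∈ A, ∀ b ∈ A, ∀ c ∈ A, le a b → le b c → le a c
  le_antisymm : ∀ a ∈ A, ∀ b ∈ A, le a b → le b a → a = b
  add_le_add : ∀ a ∈ A, ∀ b ∈ A, ∀ c ∈ A, le a b → le (a + c) (b + c)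
  smul_nonneg : ∀ (r : ℝ), 0 ≤ r → ∀ a ∈ A, le 0 a → le 0 (r • a)
  /-- SA1: the ordered vector space `A` is archimedean -/
  archimedean : ∀ a ∈ A, ∀ b ∈ A, (∀ n : ℕ, le (n • a) b) → le a 0
  /-- SA1: `1` is an order unit for `A` -/
  orderUnit : ∀ a ∈ A, ∃ r : ℝ, le a (r • (1 : R))
  /-- SA2 (together with closure of `A` under squaring) -/
  sq_mem : ∀ a ∈ A, a * a ∈ A
  sq_nonneg : ∀ a ∈ A, le 0 (a * a)
  /-- SA3 -/
  SA3 : ∀ a ∈ A, ∀ b ∈ A, le 0 a → le 0 b → le 0 (a * b * a)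
  /-- SA4 -/
  SA4 : ∀ a ∈ A, ∀ b ∈ A, le 0 b → a * b * a = 0 → a * b = 0 ∧ b * a = 0
  /-- SA5: positive elements have square roots in `CC(a)` -/
  SA5 : ∀ a ∈ A, le 0 a →
    ∃ b ∈ SynComm A (SynComm A {a}), le 0 b ∧ b * b = a
  /-- SA6: existence of carrier projections -/
  SA6 : ∀ a ∈ A, ∃ p ∈ A, p * p = p ∧ ∀ b ∈ A, (a * b = 0 ↔ p * b = 0)
  /-- SA7: elements above `1` are invertible -/
  SA7 : ∀ a ∈ A, le 1 a → ∃ b ∈ A, a * b = 1 ∧ b * a = 1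
  /-- SA8: commutants are closed under norm limits of ascending commuting sequences -/
  SA8 : ∀ a ∈ A, ∀ b ∈ A, ∀ f : ℕ → R, (∀ n, f n ∈ A) →
    (∀ n, f n * b = b * f n) → (∀ n m, f n * f m = f m * f n) →
    (∀ n, le (f n) (f (n + 1))) →
    (∀ ε : ℝ, 0 < ε → ∃ N : ℕ, ∀ n ≥ N,
        le (a - f n) (ε • (1 : R)) ∧ le ((-ε) • (1 : R)) (a - f n)) →
    a * b = b * a
  /-- non-degeneracy: `0 ≠ 1` -/
  nondegenerate : (0 : R) ≠ 1

namespace SynapticAlgebra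

variable {R : Type*} [Ring R] [Algebra ℝ R] (S : SynapticAlgebra R)

/-- The set `P` of projections of the synaptic algebra. -/
def Proj : Set R := {p | p ∈ S.A ∧ p * p = p}

/-- A symmetry: an element `s ∈ A` with `s² = 1`. -/
def IsSymmetry (s : R) : Prop := s ∈ S.A ∧ s * s = 1

/-- Projections `e` and `f` are exchanged by a symmetry. -/
def ExchBySym (e f : R) : Prop := ∃ s, S.IsSymmetry s ∧ s * e * s = f

/-- `p ∼ q`: equivalence of projections induced by finite sequences of
symmetries, i.e. `q = sₙ ⋯ s₁ p s₁ ⋯ sₙ`. -/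
def Equiv (p q : R) : Prop := Relation.ReflTransGen S.ExchBySym p q

/-- `p` and `q` are related: they have nonzero equivalent subprojections. -/
def Related (p q : R) : Prop :=
  ∃ p₁ ∈ S.Proj, ∃ q₁ ∈ S.Proj, p₁ ≠ 0 ∧ q₁ ≠ 0 ∧
    S.le p₁ p ∧ S.le q₁ q ∧ S.Equiv p₁ q₁

/-- `p ≼ q`: `p` is equivalent to a subprojection of `q`. -/
def SubEquiv (p q : R) : Prop := ∃ q₁ ∈ S.Proj, S.le q₁ q ∧ S.Equiv p q₁

/-- `c` commutes with every element of `A` (so a projection `c` with this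
property is a central projection, `c ∈ P ∩ C(A)`). -/
def IsCentral (c : R) : Prop := ∀ a ∈ S.A, c * a = a * c

/-- `m = e ∧ f`, the infimum of `e` and `f` in the projection lattice `P`. -/
def IsMeet (e f m : R) : Prop :=
  m ∈ S.Proj ∧ S.le m e ∧ S.le m f ∧
    ∀ r ∈ S.Proj, S.le r e → S.le r f → S.le r m

/-- `j = e ∨ f`, the supremum of `e` and `f` in the projection lattice `P`. -/
def IsJoin (e f j : R) : Prop :=
  j ∈ S.Proj ∧ S.le e j ∧ S.le f j ∧
    ∀ r ∈ S.Proj, S.le e r → S.le f r → S.le j r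

/-- `m = ⋁ Q`, the supremum of the set `Q` in the projection lattice `P`. -/
def IsSupOf (Q : Set R) (m : R) : Prop :=
  m ∈ S.Proj ∧ (∀ q ∈ Q, S.le q m) ∧
    ∀ b ∈ S.Proj, (∀ q ∈ Q, S.le q b) → S.le m b

/-- `m = ⋀ Q`, the infimum of the set `Q` in the projection lattice `P`. -/
def IsInfOf (Q : Set R) (m : R) : Prop :=
  m ∈ S.Proj ∧ (∀ q ∈ Q, S.le m q) ∧
    ∀ b ∈ S.Proj, (∀ q ∈ Q, S.le b q) → S.le b m

/-- The projection lattice `P` is a complete lattice: every subset of `P`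
has a supremum and an infimum in `P`. -/
def ProjComplete : Prop :=
  ∀ Q ⊆ S.Proj, (∃ m, S.IsSupOf Q m) ∧ (∃ m, S.IsInfOf Q m)

/-- The projection lattice `P` is centrally orthocomplete: every family of
projections dominated by a pairwise orthogonal family of central projections
has a supremum in `P`. -/
def CentrallyOrthocomplete : Prop :=
  ∀ Q ⊆ S.Proj, ∀ c : R → R,
    (∀ q ∈ Q, c q ∈ S.Proj ∧ S.IsCentral (c q) ∧ S.le q (c q)) →
    (∀ q ∈ Q, ∀ q' ∈ Q, q ≠ q' → c q * c q' = 0) →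
    ∃ m, S.IsSupOf Q m

/-- `c = γ p`: `c` is the central cover of `p`, the smallest central
projection dominating `p`. -/
def IsCentralCover (p c : R) : Prop :=
  c ∈ S.Proj ∧ S.IsCentral c ∧ S.le p c ∧
    ∀ d ∈ S.Proj, S.IsCentral d → S.le p d → S.le c d

/-- `x = φ_e(f) = e ∧ (e^⊥ ∨ f)`, the Sasaki projection of `f` determined
by `e`, in the projection lattice `P` (where `e^⊥ = 1 - e`). -/
def IsSasaki (e f x : R) : Prop :=
  ∃ j, S.IsJoin (1 - e) f j ∧ S.IsMeet e j x

/-- Mackey compatibility of projections `p` and `q` in the OML `P`: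
there are pairwise orthogonal projections `p₁, q₁, d` with `p = p₁ ∨ d = p₁ + d`
and `q = q₁ ∨ d = q₁ + d` (orthogonal projections satisfy `pq = qp = 0` and
their join is their sum). -/
def Compatible (p q : R) : Prop :=
  ∃ p₁ ∈ S.Proj, ∃ q₁ ∈ S.Proj, ∃ d ∈ S.Proj,
    p₁ * q₁ = 0 ∧ q₁ * p₁ = 0 ∧ p₁ * d = 0 ∧ d * p₁ = 0 ∧
    q₁ * d = 0 ∧ d * q₁ = 0 ∧ p = p₁ + d ∧ q = q₁ + d

end SynapticAlgebra

theorem idem_mul' {R : Type*} [Ring R] {p : R} (hpp : p*p = p) (x : R) : p*(p*x) = p*x := by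
  rw [← mul_assoc, hpp]

namespace SynapticAlgebra

variable {R : Type*} [Ring R] [Algebra ℝ R] (S : SynapticAlgebra R)

/-! ### Membership lemmas -/

lemma neg_mem {a : R} (ha : a ∈ S.A) : -a ∈ S.A := by
  have := S.smul_mem (-1) ha; simpa using this

lemma sub_mem {a b : R} (ha : a ∈ S.A) (hb : b ∈ S.A) : a - b ∈ S.A := by
  have := S.add_mem ha (S.neg_mem hb); simpa [sub_eq_add_neg] using this

lemma jordan_mem {a b : R} (ha : a ∈ S.A) (hb : b ∈ S.A) : a*b + b*a ∈ S.A := by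
  have h := S.sub_mem (S.sub_mem (S.sq_mem _ (S.add_mem ha hb)) (S.sq_mem _ ha)) (S.sq_mem _ hb)
  have e : (a+b)*(a+b) - a*a - b*b = a*b + b*a := by noncomm_ring
  rwa [e] at h

lemma triple_mem {a b : R} (ha : a ∈ S.A) (hb : b ∈ S.A) : a*b*a ∈ S.A := by
  have hJ : a*b + b*a ∈ S.A := S.jordan_mem ha hb
  have hK : a*(a*b + b*a) + (a*b + b*a)*a ∈ S.A := S.jordan_mem ha hJ
  have hL : (a*a)*b + b*(a*a) ∈ S.A := S.jordan_mem (S.sq_mem _ ha) hb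
  have hM := S.smul_mem (1/2 : ℝ) (S.sub_mem hK hL)
  have e : (a*(a*b + b*a) + (a*b + b*a)*a) - ((a*a)*b + b*(a*a)) = a*b*a + a*b*a := by
    noncomm_ring
  rw [e] at hM
  have e2 : (1/2 : ℝ) • (a*b*a + a*b*a) = a*b*a := by
    rw [← two_smul ℝ (a*b*a), smul_smul]; norm_num
  rwa [e2] at hM

lemma cmul_mem {a b : R} (ha : a ∈ S.A) (hb : b ∈ S.A) (hc : a*b = b*a) : a*b ∈ S.A := by
  have hJ : a*b + b*a ∈ S.A := S.jordan_mem ha hb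
  rw [← hc] at hJ
  have hM := S.smul_mem (1/2 : ℝ) hJ
  have e2 : (1/2 : ℝ) • (a*b + a*b) = a*b := by
    rw [← two_smul ℝ (a*b), smul_smul]; norm_num
  rwa [e2] at hM

/-! ### Order lemmas -/

lemma le_iff_pos {a b : R} (ha : a ∈ S.A) (hb : b ∈ S.A) : S.le a b ↔ S.le 0 (b - a) := by
  constructor
  · intro h
    have := S.add_le_add a ha b hb (-a) (S.neg_mem ha) h
    simpa [sub_eq_add_neg] using this
  · intro h
    have := S.add_le_add 0 S.zero_mem (b - a) (S.sub_mem hb ha) a ha h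
    simpa using this

lemma pos_add {a b : R} (ha : a ∈ S.A) (hb : b ∈ S.A) (h1 : S.le 0 a) (h2 : S.le 0 b) :
    S.le 0 (a + b) := by
  have h3 := S.add_le_add 0 S.zero_mem a ha b hb h1
  rw [zero_add] at h3
  exact S.le_trans 0 S.zero_mem b hb (a+b) (S.add_mem ha hb) h2 h3

lemma pos_neg_zero {a : R} (ha : a ∈ S.A) (h1 : S.le 0 a) (h2 : S.le 0 (-a)) : a = 0 := by
  have h3 : S.le a 0 := by
    rw [S.le_iff_pos ha S.zero_mem]; simpa using h2
  exact S.le_antisymm a ha 0 S.zero_mem h3 h1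

lemma pos_sum_zero {a b : R} (ha : a ∈ S.A) (hb : b ∈ S.A) (h1 : S.le 0 a) (h2 : S.le 0 b)
    (h : a + b = 0) : a = 0 ∧ b = 0 := by
  have hna : -a = b := neg_eq_of_add_eq_zero_right h
  have ha0 : a = 0 := S.pos_neg_zero ha h1 (hna ▸ h2)
  refine ⟨ha0, by rw [ha0] at h; simpa using h⟩

lemma pos_one : S.le 0 (1 : R) := by
  have := S.sq_nonneg 1 S.one_mem; simpa using this

lemma pos_smul_one {r : ℝ} (hr : 0 ≤ r) : S.le 0 (r • (1 : R)) :=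
  S.smul_nonneg r hr 1 S.one_mem S.pos_one

lemma smul_one_mono {r r' : ℝ} (h : r ≤ r') : S.le (r • (1 : R)) (r' • (1 : R)) := by
  rw [S.le_iff_pos (S.smul_mem _ S.one_mem) (S.smul_mem _ S.one_mem), ← sub_smul]
  exact S.pos_smul_one (by linarith)

lemma conj_pos {c x : R} (hc : c ∈ S.A) (hx : x ∈ S.A) (h1 : S.le 0 c) (h2 : S.le 0 x) :
    S.le 0 (c*x*c) := S.SA3 c hc x hx h1 h2

lemma conj_mono {c a b : R} (hc : c ∈ S.A) (ha : a ∈ S.A) (hb : b ∈ S.A) (h1 : S.le 0 c)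
    (h : S.le a b) : S.le (c*a*c) (c*b*c) := by
  rw [S.le_iff_pos ha hb] at h
  have h2 := S.SA3 c hc (b-a) (S.sub_mem hb ha) h1 h
  rw [S.le_iff_pos (S.triple_mem hc ha) (S.triple_mem hc hb)]
  have e : c*(b-a)*c = c*b*c - c*a*c := by noncomm_ring
  rwa [e] at h2

lemma flip_zero {b v : R} (hb : b ∈ S.A) (hv : v ∈ S.A) (hpos : S.le 0 v) (h : b*v = 0) :
    v*b = 0 := by
  have h2 : b*v*b = 0 := by rw [h, zero_mul]
  exact (S.SA4 b hb v hv hpos h2).2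

lemma flip_zero' {b v : R} (hb : b ∈ S.A) (hv : v ∈ S.A) (hpos : S.le 0 v) (h : v*b = 0) :
    b*v = 0 := by
  have h2 : b*v*b = 0 := by rw [mul_assoc, h, mul_zero]
  exact (S.SA4 b hb v hv hpos h2).1

/-! ### Square roots and carriers -/

lemma sqrt_spec {a : R} (ha : a ∈ S.A) (hpos : S.le 0 a) :
    ∃ s : R, s ∈ S.A ∧ S.le 0 s ∧ s*s = a ∧ ∀ c ∈ S.A, c*a = a*c → s*c = c*s := by
  obtain ⟨s, hs, hsp, hss⟩ := S.SA5 a ha hpos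
  exact ⟨s, hs.1, hsp, hss, fun c hc hcomm => hs.2 c ⟨hc, fun b hb => by
    simp only [Set.mem_singleton_iff] at hb; rw [hb]; exact hcomm⟩⟩

lemma carrier_spec {a : R} (ha : a ∈ S.A) :
    ∃ p : R, p ∈ S.A ∧ p*p = p ∧ a*p = a ∧ p*a = a ∧ (∀ b ∈ S.A, (a*b = 0 ↔ p*b = 0)) := by
  obtain ⟨p, hpA, hpp, hiff⟩ := S.SA6 a ha
  have h1p : (1:R) - p ∈ S.A := S.sub_mem S.one_mem hpA
  have hp1p : p*(1-p) = 0 := by noncomm_ring [hpp]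
  have ha1p : a*(1-p) = 0 := (hiff (1-p) h1p).2 hp1p
  have hap : a*p = a := by
    have : a*(1-p) = a - a*p := by noncomm_ring
    rw [this] at ha1p; exact (sub_eq_zero.mp ha1p).symm
  have hpos1p : S.le 0 (1-p) := by
    have : ((1:R)-p)*(1-p) = 1-p := by noncomm_ring [hpp]
    have h := S.sq_nonneg (1-p) h1p; rwa [this] at h
  have h2 : a*(1-p)*a = 0 := by rw [ha1p, zero_mul]
  have hpa : p*a = a := by
    have h3 := (S.SA4 a ha (1-p) h1p hpos1p h2).2
    have : (1-p)*a = a - p*a := by noncomm_ring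
    rw [this] at h3; exact (sub_eq_zero.mp h3).symm
  exact ⟨p, hpA, hpp, hap, hpa, hiff⟩

lemma comm_carrier {v c p : R} (hv : v ∈ S.A) (hvpos : S.le 0 v) (hc : c ∈ S.A)
    (hcomm : c*v = v*c) (hpA : p ∈ S.A) (hpp : p*p = p) (hvp : v*p = v) (hpv : p*v = v)
    (hiff : ∀ b ∈ S.A, (v*b = 0 ↔ p*b = 0)) : c*p = p*c := by
  have h1p : (1:R) - p ∈ S.A := S.sub_mem S.one_mem hpA
  have hppos : S.le 0 p := by
    have h := S.sq_nonneg p hpA; rwa [hpp] at h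
  have hω : c*(1-p) + (1-p)*c ∈ S.A := S.jordan_mem hc h1p
  have hv1p : v*(1-p) = 0 := by rw [mul_sub, hvp, mul_one, sub_self]
  have hvω : v*(c*(1-p) + (1-p)*c) = 0 := by
    have e : v*(c*(1-p) + (1-p)*c) = (v*c)*(1-p) + (v*(1-p))*c := by noncomm_ring
    rw [e, ← hcomm, hv1p, zero_mul, add_zero, mul_assoc, hv1p, mul_zero]
  have hpω : p*(c*(1-p) + (1-p)*c) = 0 := (hiff _ hω).1 hvω
  have hpc1p : p*c*(1-p) = 0 := by
    have e : p*(c*(1-p) + (1-p)*c) = p*c*(1-p) + (p*(1-p))*c := by noncomm_ring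
    have hp1p : p*(1-p) = 0 := by noncomm_ring [hpp]
    rw [e, hp1p, zero_mul, add_zero] at hpω; exact hpω
  have hωp : (c*(1-p) + (1-p)*c)*p = 0 := S.flip_zero' hω hpA hppos hpω
  have h1pcp : (1-p)*c*p = 0 := by
    have e : (c*(1-p) + (1-p)*c)*p = c*((1-p)*p) + (1-p)*c*p := by noncomm_ring
    have h1pp : (1-p)*p = 0 := by noncomm_ring [hpp]
    rw [e, h1pp, mul_zero, zero_add] at hωp; exact hωp
  have e1 : p*c = p*c*p := by
    have : p*c*(1-p) = p*c - p*c*p := by noncomm_ring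
    rw [this] at hpc1p; exact sub_eq_zero.mp hpc1p
  have e2 : c*p = p*(c*p) := by
    have : (1-p)*c*p = c*p - p*(c*p) := by noncomm_ring
    rw [this] at h1pcp; exact sub_eq_zero.mp h1pcp
  rw [e2, e1, mul_assoc]

end SynapticAlgebra
namespace SynapticAlgebra

variable {R : Type*} [Ring R] [Algebra ℝ R] (S : SynapticAlgebra R)

/-- Positivity lemma: if `x*w = 0` and `x + w ≥ 0` then `x ≥ 0`. -/
lemma pos_of_orth_sum {x w : R} (hx : x ∈ S.A) (hw : w ∈ S.A) (hxw : x*w = 0)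
    (hpos : S.le 0 (x + w)) : S.le 0 x := by
  obtain ⟨p, hpA, hpp, hxp, hpx, hiff⟩ := S.carrier_spec hx
  have hppos : S.le 0 p := by have h := S.sq_nonneg p hpA; rwa [hpp] at h
  have hpw : p*w = 0 := (hiff w hw).1 hxw
  have hwp : w*p = 0 := S.flip_zero' hw hpA hppos hpw
  have key : p*(x+w)*p = x := by
    have hpwp : p*w*p = 0 := by rw [hpw, zero_mul]
    rw [mul_add, hpx, add_mul, hpwp, hxp, add_zero]
  have := S.SA3 p hpA (x+w) (S.add_mem hx hw) hppos hpos
  rwa [key] at this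

/-- Positive/negative part decomposition. -/
lemma posPart_spec {x : R} (hx : x ∈ S.A) :
    ∃ r u v : R, r ∈ S.A ∧ u ∈ S.A ∧ v ∈ S.A ∧ S.le 0 r ∧ S.le 0 u ∧ S.le 0 v ∧
      r = u + v ∧ x = u - v ∧ u*v = 0 ∧ v*u = 0 ∧ r*x = x*r ∧ r*r = x*x ∧
      (∀ c ∈ S.A, c*x = x*c → c*u = u*c ∧ c*v = v*c ∧ c*r = r*c) := by
  obtain ⟨r, hrA, hrpos, hrr, hrc⟩ := S.sqrt_spec (S.sq_mem x hx) (S.sq_nonneg x hx)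
  have hrx : r*x = x*r := hrc x hx (by rw [mul_assoc, ← mul_assoc])
  set u : R := (1/2 : ℝ) • (r + x) with hu
  set v : R := (1/2 : ℝ) • (r - x) with hv
  have huA : u ∈ S.A := S.smul_mem _ (S.add_mem hrA hx)
  have hvA : v ∈ S.A := S.smul_mem _ (S.sub_mem hrA hx)
  have huv : u*v = 0 := by
    rw [hu, hv, smul_mul_assoc, mul_smul_comm, smul_smul]
    have e : (r + x)*(r - x) = r*r - (r*x) + (x*r) - x*x := by noncomm_ring
    rw [e, hrr, hrx]; simp
  have hvu : v*u = 0 := by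
    rw [hu, hv, smul_mul_assoc, mul_smul_comm, smul_smul]
    have e : (r - x)*(r + x) = r*r + (r*x) - (x*r) - x*x := by noncomm_ring
    rw [e, hrr, hrx]; simp
  have hsum : u + v = r := by
    rw [hu, hv, ← smul_add]
    have : (r + x) + (r - x) = r + r := by abel
    rw [this, ← two_smul ℝ r, smul_smul]; norm_num
  have hdiff : u - v = x := by
    rw [hu, hv, ← smul_sub]
    have : (r + x) - (r - x) = x + x := by abel
    rw [this, ← two_smul ℝ x, smul_smul]; norm_num
  have hupos : S.le 0 u := S.pos_of_orth_sum huA hvA huv (by rw [hsum]; exact hrpos)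
  have hvpos : S.le 0 v := S.pos_of_orth_sum hvA huA hvu (by rw [add_comm, hsum]; exact hrpos)
  refine ⟨r, u, v, hrA, huA, hvA, hrpos, hupos, hvpos, hsum.symm, hdiff.symm, huv, hvu, hrx, hrr, ?_⟩
  intro c hc hcx
  have hcx2 : c*(x*x) = (x*x)*c := by
    rw [← mul_assoc, hcx, mul_assoc, hcx, mul_assoc]
  have hcr : r*c = c*r := hrc c hc hcx2
  constructor
  · rw [hu, mul_smul_comm, smul_mul_assoc, mul_add, add_mul, hcr, hcx]
  constructor
  · rw [hv, mul_smul_comm, smul_mul_assoc, mul_sub, sub_mul, hcr, hcx]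
  · exact hcr.symm

/-- product of commuting positive elements is positive. -/
lemma pos_mul_comm {a b : R} (ha : a ∈ S.A) (hb : b ∈ S.A) (hapos : S.le 0 a)
    (hbpos : S.le 0 b) (hcomm : a*b = b*a) : S.le 0 (a*b) := by
  obtain ⟨s, hsA, hspos, hss, hsc⟩ := S.sqrt_spec ha hapos
  have hsb : s*b = b*s := hsc b hb hcomm.symm
  have e : s*b*s = a*b := by rw [hsb, mul_assoc, hss, ← hcomm]
  have := S.SA3 s hsA b hb hspos hbpos
  rwa [e] at this

end SynapticAlgebra
namespace SynapticAlgebra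

variable {R : Type*} [Ring R] [Algebra ℝ R] (S : SynapticAlgebra R)

/-- If `Y ≥ 0` and `lam•Y² − Y³ ≥ 0` with `lam > 0`, then `Y ≤ lam•1`. -/
lemma le_of_cube {Y : R} (hY : Y ∈ S.A) (hYpos : S.le 0 Y) {lam : ℝ} (hlam : 0 < lam)
    (h : S.le 0 (lam • (Y*Y) - Y*(Y*Y))) : S.le Y (lam • (1:R)) := by
  obtain ⟨r, k, κ, hrA, hkA, hκA, hrpos, hkpos, hκpos, hsum, hdiff, hkκ, hκk, hrx, hrr, htrans⟩ :=
    S.posPart_spec (S.sub_mem hY (S.smul_mem lam S.one_mem))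
  have hYcomm : Y*(Y - lam•(1:R)) = (Y - lam•(1:R))*Y := by
    rw [mul_sub, sub_mul, mul_smul_comm, smul_mul_assoc, one_mul, mul_one]
  obtain ⟨hYk, hYκ, hYr⟩ := htrans Y hY hYcomm
  have hkY : k*Y = Y*k := hYk.symm
  have hYeq : Y = k - κ + lam•(1:R) := by rw [← hdiff]; abel
  have hzk : Y*k = lam•k + k*k := by
    calc Y*k = (k - κ + lam•(1:R))*k := by rw [← hYeq]
      _ = k*k - κ*k + lam•k := by rw [add_mul, sub_mul, smul_mul_assoc, one_mul]
      _ = lam•k + k*k := by rw [hκk]; abel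
  have hzA : Y*k ∈ S.A := by
    rw [hzk]; exact S.add_mem (S.smul_mem _ hkA) (S.sq_mem _ hkA)
  have hzpos : S.le 0 (Y*k) := by
    rw [hzk]
    exact S.pos_add (S.smul_mem _ hkA) (S.sq_mem _ hkA)
      (S.smul_nonneg lam hlam.le k hkA hkpos) (S.sq_nonneg k hkA)
  have hEA : lam • (Y*Y) - Y*(Y*Y) ∈ S.A := S.sub_mem (S.smul_mem _ (S.sq_mem _ hY))
    (S.cmul_mem hY (S.sq_mem _ hY) (by rw [← mul_assoc]))
  have hkYY : k*(Y*Y) = (Y*Y)*k := by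
    calc k*(Y*Y) = (k*Y)*Y := by rw [mul_assoc]
      _ = (Y*k)*Y := by rw [hkY]
      _ = Y*(k*Y) := by rw [mul_assoc]
      _ = Y*(Y*k) := by rw [hkY]
      _ = (Y*Y)*k := by rw [mul_assoc]
  have hE : lam • (Y*Y) - Y*(Y*Y) = -((Y*Y)*(k - κ)) := by
    have e2 : Y*(Y*Y) = (Y*Y)*(k - κ) + lam•(Y*Y) := by
      calc Y*(Y*Y) = (Y*Y)*Y := by rw [mul_assoc]
        _ = (Y*Y)*(k - κ + lam•(1:R)) := by rw [← hYeq]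
        _ = (Y*Y)*(k - κ) + lam•(Y*Y) := by rw [mul_add, mul_smul_comm, mul_one]
    rw [e2]; abel
  have hid1 : k*(lam • (Y*Y) - Y*(Y*Y))*k = -((Y*Y)*(k*(k*k))) := by
    rw [hE]
    have e3 : k*(-((Y*Y)*(k - κ)))*k = -(k*((Y*Y)*(k - κ))*k) := by noncomm_ring
    rw [e3]
    have e4 : k*((Y*Y)*(k - κ))*k = (Y*Y)*(k*(k*k)) := by
      calc k*((Y*Y)*(k - κ))*k = ((k*(Y*Y))*(k - κ))*k := by noncomm_ring
        _ = (((Y*Y)*k)*(k - κ))*k := by rw [hkYY]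
        _ = (Y*Y)*(k*(k-κ)*k) := by rw [mul_assoc (Y*Y), mul_assoc (Y*Y)]
        _ = (Y*Y)*((k*k - k*κ)*k) := by rw [mul_sub]
        _ = (Y*Y)*((k*k)*k) := by rw [hkκ, sub_zero]
        _ = (Y*Y)*(k*(k*k)) := by noncomm_ring
    rw [e4]
  have hid2 : (Y*k)*k*(Y*k) = (Y*Y)*(k*(k*k)) := by
    have s1 : k*(Y*k) = Y*(k*k) := by rw [← mul_assoc, hkY, mul_assoc]
    calc (Y*k)*k*(Y*k) = (Y*k)*(k*(Y*k)) := by rw [mul_assoc]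
      _ = (Y*k)*(Y*(k*k)) := by rw [s1]
      _ = Y*(k*(Y*(k*k))) := by rw [mul_assoc]
      _ = Y*((k*Y)*(k*k)) := by rw [← mul_assoc k Y]
      _ = Y*((Y*k)*(k*k)) := by rw [hkY]
      _ = (Y*Y)*(k*(k*k)) := by noncomm_ring
  have pos1 : S.le 0 ((Y*k)*k*(Y*k)) := S.SA3 (Y*k) hzA k hkA hzpos hkpos
  have pos2 : S.le 0 (k*(lam • (Y*Y) - Y*(Y*Y))*k) := S.SA3 k hkA _ hEA hkpos h
  have hW0 : (Y*Y)*(k*(k*k)) = 0 := by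
    have hWA : (Y*Y)*(k*(k*k)) ∈ S.A := by rw [← hid2]; exact S.triple_mem hzA hkA
    refine S.pos_neg_zero hWA (by rwa [hid2] at pos1) ?_
    rw [← hid1]; exact pos2
  have hzkz : (Y*k)*k*(Y*k) = 0 := by rw [hid2, hW0]
  have hzk0 : (Y*k)*k = 0 := (S.SA4 (Y*k) hzA k hkA hkpos hzkz).1
  have expand : (Y*k)*k = lam•(k*k) + k*(k*k) := by
    rw [hzk, add_mul, smul_mul_assoc, mul_assoc]
  have hsplit : lam•(k*k) + k*(k*k) = 0 := by rw [← expand]; exact hzk0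
  have hk3pos : S.le 0 (k*(k*k)) := by
    have := S.SA3 k hkA k hkA hkpos hkpos
    rwa [mul_assoc] at this
  have hkk0 : lam•(k*k) = 0 := (S.pos_sum_zero (S.smul_mem _ (S.sq_mem _ hkA))
    (S.cmul_mem hkA (S.sq_mem _ hkA) (by rw [← mul_assoc, mul_assoc]))
    (S.smul_nonneg lam hlam.le _ (S.sq_mem _ hkA) (S.sq_nonneg k hkA)) hk3pos hsplit).1
  have hkk : k*k = 0 := by
    rcases smul_eq_zero.mp hkk0 with h' | h'
    · exact absurd h' (ne_of_gt hlam)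
    · exact h'
  have hk0 : k = 0 := by
    have h1 : k*1*k = 0 := by rw [mul_one, hkk]
    have := (S.SA4 k hkA 1 S.one_mem S.pos_one h1).1
    rwa [mul_one] at this
  rw [S.le_iff_pos hY (S.smul_mem _ S.one_mem)]
  have e : lam•(1:R) - Y = κ := by
    rw [hk0, zero_sub] at hdiff
    rw [← neg_sub Y, hdiff, neg_neg]
  rw [e]; exact hκpos

/-- If `β ≥ 0` and `κ•β − β² ≥ 0` with `κ > 0`, then `β ≤ κ•1`. -/
lemma le_of_sq {β : R} (hβ : β ∈ S.A) (hβpos : S.le 0 β) {κ : ℝ} (hκ : 0 < κ)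
    (h : S.le 0 (κ • β - β*β)) : S.le β (κ • (1:R)) := by
  obtain ⟨s, hsA, hspos, hss, hsc⟩ := S.sqrt_spec hβ hβpos
  have hsβ : s*β = β*s := hsc β hβ rfl
  have hconj := S.SA3 s hsA _ (S.sub_mem (S.smul_mem _ hβ) (S.sq_mem _ hβ)) hspos h
  have e : s*(κ•β - β*β)*s = κ•(β*β) - β*(β*β) := by
    have e1 : s*β*s = β*β := by rw [hsβ, mul_assoc, hss]
    have e2 : s*(β*β)*s = β*(β*β) := by
      calc s*(β*β)*s = ((s*β)*β)*s := by noncomm_ring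
        _ = ((β*s)*β)*s := by rw [hsβ]
        _ = (β*(s*β))*s := by rw [mul_assoc β]
        _ = (β*(β*s))*s := by rw [hsβ]
        _ = β*(β*(s*s)) := by noncomm_ring
        _ = β*(β*β) := by rw [hss]
    calc s*(κ•β - β*β)*s = κ•(s*β*s) - s*(β*β)*s := by
          rw [mul_sub, sub_mul, mul_smul_comm, smul_mul_assoc]
      _ = κ•(β*β) - β*(β*β) := by rw [e1, e2]
  rw [e] at hconj
  exact S.le_of_cube hβ hβpos hκ hconj

/-- The negative part of `v - lam•1` for positive `v` is at most `lam•1`. -/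
lemma negPart_le {v u w : R} (hv : v ∈ S.A) (_hu : u ∈ S.A) (hw : w ∈ S.A)
    (hvpos : S.le 0 v) (hwpos : S.le 0 w) {lam : ℝ} (hlam : 0 < lam)
    (hdiff : v - lam•(1:R) = u - w) (huw : u*w = 0) (hwu : w*u = 0) :
    S.le w (lam • (1:R)) := by
  have hveq : v = u - w + lam•(1:R) := by rw [← hdiff]; abel
  have hvw : v*w = lam•w - w*w := by
    calc v*w = (u - w + lam•(1:R))*w := by rw [← hveq]
      _ = u*w - w*w + lam•w := by rw [add_mul, sub_mul, smul_mul_assoc, one_mul]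
      _ = lam•w - w*w := by rw [huw]; abel
  have hwv : w*v = lam•w - w*w := by
    calc w*v = w*(u - w + lam•(1:R)) := by rw [← hveq]
      _ = w*u - w*w + lam•w := by rw [mul_add, mul_sub, mul_smul_comm, mul_one]
      _ = lam•w - w*w := by rw [hwu]; abel
  have hpos : S.le 0 (v*w) := S.pos_mul_comm hv hw hvpos hwpos (by rw [hvw, hwv])
  rw [hvw] at hpos
  exact S.le_of_sq hw hwpos hlam hpos

end SynapticAlgebra
namespace SynapticAlgebra

variable {R : Type*} [Ring R] [Algebra ℝ R] (S : SynapticAlgebra R)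

/-! ### Projection lemmas -/

lemma proj_mem {p : R} (hp : p ∈ S.Proj) : p ∈ S.A := hp.1
lemma proj_idem {p : R} (hp : p ∈ S.Proj) : p*p = p := hp.2

lemma proj_pos {p : R} (hp : p ∈ S.Proj) : S.le 0 p := by
  have := S.sq_nonneg p hp.1; rwa [hp.2] at this

lemma proj_compl {p : R} (hp : p ∈ S.Proj) : (1:R) - p ∈ S.Proj :=
  ⟨S.sub_mem S.one_mem hp.1, by noncomm_ring [hp.2]⟩

lemma zero_proj : (0:R) ∈ S.Proj := ⟨S.zero_mem, by rw [mul_zero]⟩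
lemma one_proj : (1:R) ∈ S.Proj := ⟨S.one_mem, by rw [mul_one]⟩

lemma proj_le_of_mul {p q : R} (hp : p ∈ S.Proj) (hq : q ∈ S.Proj)
    (h1 : p*q = p) (h2 : q*p = p) : S.le p q := by
  rw [S.le_iff_pos hp.1 hq.1]
  have e : (q - p)*(q - p) = q - p := by noncomm_ring [hp.2, hq.2, h1, h2]
  have := S.sq_nonneg (q - p) (S.sub_mem hq.1 hp.1)
  rwa [e] at this

lemma mul_of_proj_le {p q : R} (hp : p ∈ S.Proj) (hq : q ∈ S.Proj) (h : S.le p q) :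
    p*q = p ∧ q*p = p := by
  have h1q : (1:R) - q ∈ S.Proj := S.proj_compl hq
  have hpos := (S.le_iff_pos hp.1 hq.1).1 h
  have hconj := S.SA3 (1-q) h1q.1 (q - p) (S.sub_mem hq.1 hp.1) (S.proj_pos h1q) hpos
  have e : (1-q)*(q-p)*(1-q) = -((1-q)*p*(1-q)) := by noncomm_ring [hq.2]
  rw [e] at hconj
  have hzpz : (1-q)*p*(1-q) = 0 :=
    S.pos_neg_zero (S.triple_mem h1q.1 hp.1)
      (S.SA3 (1-q) h1q.1 p hp.1 (S.proj_pos h1q) (S.proj_pos hp)) hconj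
  have h4 := S.SA4 (1-q) h1q.1 p hp.1 (S.proj_pos hp) hzpz
  constructor
  · have := h4.2
    have e2 : p*(1-q) = p - p*q := by noncomm_ring
    rw [e2] at this; exact (sub_eq_zero.mp this).symm
  · have := h4.1
    have e2 : (1-q)*p = p - q*p := by noncomm_ring
    rw [e2] at this; exact (sub_eq_zero.mp this).symm

lemma proj_le_one {p : R} (hp : p ∈ S.Proj) : S.le p 1 :=
  S.proj_le_of_mul hp S.one_proj (mul_one p) (one_mul p)

lemma proj_eq_zero_of_le_both {r p : R} (hr : r ∈ S.Proj) (hp : p ∈ S.Proj)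
    (h1 : S.le r p) (h2 : S.le r (1 - p)) : r = 0 := by
  have m1 := (S.mul_of_proj_le hr hp h1).1
  have m2 := (S.mul_of_proj_le hr (S.proj_compl hp) h2).1
  have e : r*(1-p) = r - r*p := by noncomm_ring
  rw [e, m1, sub_self] at m2
  exact m2.symm

lemma compl_le_compl {p q : R} (hp : p ∈ S.Proj) (hq : q ∈ S.Proj) (h : S.le p q) :
    S.le (1 - q) (1 - p) := by
  obtain ⟨m1, m2⟩ := S.mul_of_proj_le hp hq h
  refine S.proj_le_of_mul (S.proj_compl hq) (S.proj_compl hp) ?_ ?_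
  · noncomm_ring [m2]
  · noncomm_ring [m1]

/-- The join of two projections, via the carrier of their sum. -/
lemma join_spec {p q : R} (hp : p ∈ S.Proj) (hq : q ∈ S.Proj) :
    ∃ j : R, j ∈ S.Proj ∧ S.le p j ∧ S.le q j ∧
      ∀ r ∈ S.Proj, S.le p r → S.le q r → S.le j r := by
  have hpqA : p + q ∈ S.A := S.add_mem hp.1 hq.1
  obtain ⟨j, hjA, hjj, hsj, hjs, hiff⟩ := S.carrier_spec hpqA
  have hj : j ∈ S.Proj := ⟨hjA, hjj⟩
  have h1j : (1:R) - j ∈ S.Proj := S.proj_compl hj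
  have hs1j : (p+q)*(1-j) = 0 := by rw [mul_sub, hsj, mul_one, sub_self]
  have h1js : (1-j)*(p+q) = 0 := by rw [sub_mul, hjs, one_mul, sub_self]
  have key : (1-j)*p*(1-j) + (1-j)*q*(1-j) = 0 := by
    have e : (1-j)*p*(1-j) + (1-j)*q*(1-j) = ((1-j)*(p+q))*(1-j) := by noncomm_ring
    rw [e, h1js, zero_mul]
  have hposp := S.SA3 (1-j) h1j.1 p hp.1 (S.proj_pos h1j) (S.proj_pos hp)
  have hposq := S.SA3 (1-j) h1j.1 q hq.1 (S.proj_pos h1j) (S.proj_pos hq)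
  obtain ⟨hp0, hq0⟩ := S.pos_sum_zero (S.triple_mem h1j.1 hp.1) (S.triple_mem h1j.1 hq.1)
    hposp hposq key
  have lep : S.le p j := by
    obtain ⟨e1, e2⟩ := S.SA4 (1-j) h1j.1 p hp.1 (S.proj_pos hp) hp0
    refine S.proj_le_of_mul hp hj ?_ ?_
    · have : p*(1-j) = p - p*j := by noncomm_ring
      rw [this] at e2; exact (sub_eq_zero.mp e2).symm
    · have : (1-j)*p = p - j*p := by noncomm_ring
      rw [this] at e1; exact (sub_eq_zero.mp e1).symm
  have leq : S.le q j := by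
    obtain ⟨e1, e2⟩ := S.SA4 (1-j) h1j.1 q hq.1 (S.proj_pos hq) hq0
    refine S.proj_le_of_mul hq hj ?_ ?_
    · have : q*(1-j) = q - q*j := by noncomm_ring
      rw [this] at e2; exact (sub_eq_zero.mp e2).symm
    · have : (1-j)*q = q - j*q := by noncomm_ring
      rw [this] at e1; exact (sub_eq_zero.mp e1).symm
  refine ⟨j, hj, lep, leq, ?_⟩
  intro r hr hpr hqr
  have mp := S.mul_of_proj_le hp hr hpr
  have mq := S.mul_of_proj_le hq hr hqr
  have hsum1r : (p+q)*(1-r) = 0 := by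
    have : (p+q)*(1-r) = (p - p*r) + (q - q*r) := by noncomm_ring
    rw [this, mp.1, mq.1, sub_self, sub_self, add_zero]
  have hj1r : j*(1-r) = 0 := (hiff (1-r) (S.sub_mem S.one_mem hr.1)).1 hsum1r
  have h1rj : (1-r)*j = 0 :=
    S.flip_zero hjA (S.sub_mem S.one_mem hr.1) (S.proj_pos (S.proj_compl hr)) hj1r
  refine S.proj_le_of_mul hj hr ?_ ?_
  · have : j*(1-r) = j - j*r := by noncomm_ring
    rw [this] at hj1r; exact (sub_eq_zero.mp hj1r).symm
  · have : (1-r)*j = j - r*j := by noncomm_ring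
    rw [this] at h1rj; exact (sub_eq_zero.mp h1rj).symm

/-- The meet of two projections. -/
lemma meet_spec {p q : R} (hp : p ∈ S.Proj) (hq : q ∈ S.Proj) :
    ∃ m : R, m ∈ S.Proj ∧ S.le m p ∧ S.le m q ∧
      ∀ r ∈ S.Proj, S.le r p → S.le r q → S.le r m := by
  obtain ⟨j, hj, h1p, h1q, hmin⟩ := S.join_spec (S.proj_compl hp) (S.proj_compl hq)
  refine ⟨1 - j, S.proj_compl hj, ?_, ?_, ?_⟩
  · have := S.compl_le_compl (S.proj_compl hp) hj h1p
    rwa [sub_sub_cancel] at this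
  · have := S.compl_le_compl (S.proj_compl hq) hj h1q
    rwa [sub_sub_cancel] at this
  · intro r hr hrp hrq
    have l1 : S.le (1-p) (1-r) := S.compl_le_compl hr hp hrp
    have l2 : S.le (1-q) (1-r) := S.compl_le_compl hr hq hrq
    have h3 := hmin (1-r) (S.proj_compl hr) l1 l2
    have := S.compl_le_compl hj (S.proj_compl hr) h3
    rwa [sub_sub_cancel] at this

end SynapticAlgebra
namespace SynapticAlgebra

variable {R : Type*} [Ring R] [Algebra ℝ R] (S : SynapticAlgebra R)

/-! ### Symmetries and equivalence -/

lemma conj_sym_pos {s x : R} (hs : S.IsSymmetry s) (hx : x ∈ S.A) (hxpos : S.le 0 x) :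
    S.le 0 (s*x*s) := by
  obtain ⟨c, hcA, hcpos, hcc, _⟩ := S.sqrt_spec hx hxpos
  have e : (s*c*s)*(s*c*s) = s*x*s := by
    calc (s*c*s)*(s*c*s) = s*c*((s*s)*(c*s)) := by noncomm_ring
      _ = s*c*(c*s) := by rw [hs.2, one_mul]
      _ = s*x*s := by rw [← hcc]; noncomm_ring
  have := S.sq_nonneg (s*c*s) (S.triple_mem hs.1 hcA)
  rwa [e] at this

lemma conj_sym_mono {s a b : R} (hs : S.IsSymmetry s) (ha : a ∈ S.A) (hb : b ∈ S.A)
    (h : S.le a b) : S.le (s*a*s) (s*b*s) := by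
  rw [S.le_iff_pos ha hb] at h
  have := S.conj_sym_pos hs (S.sub_mem hb ha) h
  rw [S.le_iff_pos (S.triple_mem hs.1 ha) (S.triple_mem hs.1 hb)]
  have e : s*(b-a)*s = s*b*s - s*a*s := by noncomm_ring
  rwa [e] at this

lemma conj_sym_proj {s p : R} (hs : S.IsSymmetry s) (hp : p ∈ S.Proj) : s*p*s ∈ S.Proj := by
  refine ⟨S.triple_mem hs.1 hp.1, ?_⟩
  calc (s*p*s)*(s*p*s) = s*p*((s*s)*(p*s)) := by noncomm_ring
    _ = s*(p*p)*s := by rw [hs.2, one_mul]; noncomm_ring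
    _ = s*p*s := by rw [hp.2]

lemma conj_sym_conj {s x : R} (hs : S.IsSymmetry s) : s*(s*x*s)*s = x := by
  calc s*(s*x*s)*s = (s*s)*x*(s*s) := by noncomm_ring
    _ = x := by rw [hs.2, one_mul, mul_one]

lemma exch_symm {x y : R} (h : S.ExchBySym x y) : S.ExchBySym y x := by
  obtain ⟨s, hs, he⟩ := h
  exact ⟨s, hs, by rw [← he, S.conj_sym_conj hs]⟩

lemma equiv_symm {x y : R} (h : S.Equiv x y) : S.Equiv y x := by
  induction h with
  | refl => exact Relation.ReflTransGen.refl
  | tail _ hstep ih =>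
    exact Relation.ReflTransGen.trans (Relation.ReflTransGen.single (S.exch_symm hstep)) ih

lemma exch_proj {x y : R} (hx : x ∈ S.Proj) (h : S.ExchBySym x y) : y ∈ S.Proj := by
  obtain ⟨s, hs, he⟩ := h
  rw [← he]; exact S.conj_sym_proj hs hx

lemma equiv_proj {x y : R} (hx : x ∈ S.Proj) (h : S.Equiv x y) : y ∈ S.Proj := by
  induction h with
  | refl => exact hx
  | tail _ hstep ih => exact S.exch_proj ih hstep

lemma exch_ne_zero {x y : R} (hx : x ≠ 0) (h : S.ExchBySym x y) : y ≠ 0 := by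
  obtain ⟨s, hs, he⟩ := h
  intro h0
  apply hx
  have := S.conj_sym_conj (x := x) hs
  rw [he, h0] at this
  simp at this
  exact this.symm

lemma equiv_ne_zero {x y : R} (hx : x ≠ 0) (h : S.Equiv x y) : y ≠ 0 := by
  induction h with
  | refl => exact hx
  | tail _ hstep ih => exact S.exch_ne_zero ih hstep

/-- Transport a subprojection along an equivalence. -/
lemma equiv_transport {x y : R} (hx : x ∈ S.Proj) (h : S.Equiv x y) :
    ∀ u ∈ S.Proj, S.le u x → ∃ v ∈ S.Proj, S.le v y ∧ S.Equiv u v ∧ (u ≠ 0 → v ≠ 0) := by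
  induction h with
  | refl => exact fun u hu hle => ⟨u, hu, hle, Relation.ReflTransGen.refl, fun h => h⟩
  | @tail b c hchain hstep ih =>
    intro u hu hle
    obtain ⟨v, hv, hvb, hequiv, hnz⟩ := ih u hu hle
    obtain ⟨s, hs, he⟩ := hstep
    have hb : b ∈ S.Proj := S.equiv_proj hx hchain
    refine ⟨s*v*s, S.conj_sym_proj hs hv, ?_, ?_, ?_⟩
    · rw [← he]; exact S.conj_sym_mono hs hv.1 hb.1 hvb
    · exact Relation.ReflTransGen.tail hequiv ⟨s, hs, rfl⟩
    · intro hu0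
      exact S.exch_ne_zero (hnz hu0) ⟨s, hs, rfl⟩

end SynapticAlgebra
namespace SynapticAlgebra

variable {R : Type*} [Ring R] [Algebra ℝ R] (S : SynapticAlgebra R)

lemma smul_mono {r : ℝ} (hr : 0 ≤ r) {a b : R} (ha : a ∈ S.A) (hb : b ∈ S.A)
    (h : S.le a b) : S.le (r•a) (r•b) := by
  rw [S.le_iff_pos ha hb] at h
  have := S.smul_nonneg r hr _ (S.sub_mem hb ha) h
  rw [smul_sub] at this
  rw [S.le_iff_pos (S.smul_mem _ ha) (S.smul_mem _ hb)]
  exact this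

/-- If `v ≥ 0`, `v² ≥ lam•v` then `v ≥ lam•g` where `g` is the carrier of `v`. -/
lemma carrier_lower_bound {v g : R} (hv : v ∈ S.A) (hvpos : S.le 0 v) {lam : ℝ}
    (hlam : 0 < lam) (hsq : S.le 0 (v*v - lam•v)) (hgA : g ∈ S.A) (hgg : g*g = g)
    (hvg : v*g = v) (hgv : g*v = v)
    (hiff : ∀ b ∈ S.A, (v*b = 0 ↔ g*b = 0)) : S.le 0 (v - lam•g) := by
  have hgpos : S.le 0 g := by have := S.sq_nonneg g hgA; rwa [hgg] at this
  obtain ⟨r, u, w, hrA, huA, hwA, hrpos, hupos, hwpos, hsum, hdiff, huw, hwu, hry, hrr, htrans⟩ :=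
    S.posPart_spec (S.sub_mem hv (S.smul_mem lam S.one_mem))
  -- v and g commute with y = v - lam•1
  have hvy : v*(v - lam•(1:R)) = (v - lam•(1:R))*v := by
    rw [mul_sub, sub_mul, mul_smul_comm, smul_mul_assoc, one_mul, mul_one]
  have hgy : g*(v - lam•(1:R)) = (v - lam•(1:R))*g := by
    rw [mul_sub, sub_mul, mul_smul_comm, smul_mul_assoc, one_mul, mul_one, hgv, hvg]
  obtain ⟨hvu, hvw, hvr⟩ := htrans v hv hvy
  obtain ⟨hgu, hgw, hgr⟩ := htrans g hgA hgy
  have hveq : v = u - w + lam•(1:R) := by rw [← hdiff]; abel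
  -- step 1 : v*(w*(w*w)) = 0
  have hw3A : w*(w*w) ∈ S.A := S.cmul_mem hwA (S.sq_mem _ hwA) (by rw [← mul_assoc, mul_assoc])
  have hw3pos : S.le 0 (w*(w*w)) := by
    have := S.SA3 w hwA w hwA hwpos hwpos; rwa [mul_assoc] at this
  have hcomm3 : v*(w*(w*w)) = (w*(w*w))*v := by
    calc v*(w*(w*w)) = (v*w)*(w*w) := by rw [mul_assoc]
      _ = (w*v)*(w*w) := by rw [hvw]
      _ = w*((v*w)*w) := by noncomm_ring
      _ = w*((w*v)*w) := by rw [hvw]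
      _ = (w*w)*(v*w) := by noncomm_ring
      _ = (w*w)*(w*v) := by rw [hvw]
      _ = (w*(w*w))*v := by noncomm_ring
  have key1 : w*(v*v - lam•v)*w = -(v*(w*(w*w))) := by
    have e1 : v*v - lam•v = v*(v - lam•(1:R)) := by
      rw [mul_sub, mul_smul_comm, mul_one]
    rw [e1, hdiff]
    calc w*(v*(u - w))*w = (w*v)*((u-w)*w) := by noncomm_ring
      _ = (v*w)*((u-w)*w) := by rw [hvw]
      _ = (v*w)*(u*w - w*w) := by rw [sub_mul]
      _ = v*(w*(u*w - w*w)) := by rw [mul_assoc]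
      _ = v*(w*(u*w) - w*(w*w)) := by rw [mul_sub]
      _ = v*((w*u)*w - w*(w*w)) := by rw [mul_assoc]
      _ = v*((0:R)*w - w*(w*w)) := by rw [hwu]
      _ = -(v*(w*(w*w))) := by noncomm_ring
  have pos1 : S.le 0 (w*(v*v - lam•v)*w) :=
    S.SA3 w hwA _ (S.sub_mem (S.sq_mem _ hv) (S.smul_mem _ hv)) hwpos hsq
  have pos2 : S.le 0 (v*(w*(w*w))) := S.pos_mul_comm hv hw3A hvpos hw3pos hcomm3
  have hvw3A : v*(w*(w*w)) ∈ S.A := S.cmul_mem hv hw3A hcomm3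
  have step1 : v*(w*(w*w)) = 0 := by
    refine S.pos_neg_zero hvw3A pos2 ?_
    rw [← key1]; exact pos1
  have step2 : g*(w*(w*w)) = 0 := (hiff _ hw3A).1 step1
  -- T := g*w is positive with T³ = 0, hence T = 0
  have hgwc : g*w = w*g := hgw
  have hTA : g*w ∈ S.A := S.cmul_mem hgA hwA hgwc
  have hTpos : S.le 0 (g*w) := S.pos_mul_comm hgA hwA hgpos hwpos hgwc
  have hT3 : (g*w)*(g*w)*(g*w) = g*(w*(w*w)) := by
    calc (g*w)*(g*w)*(g*w) = g*((w*g)*(w*g))*w := by noncomm_ring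
      _ = g*((g*w)*(g*w))*w := by rw [hgwc]
      _ = (g*g)*(w*g)*(w*w) := by noncomm_ring
      _ = (g*g)*(g*w)*(w*w) := by rw [hgwc]
      _ = ((g*g)*g)*(w*(w*w)) := by noncomm_ring
      _ = g*(w*(w*w)) := by rw [hgg, hgg]
  have hT0 : g*w = 0 := by
    have h3 : (g*w)*(g*w)*(g*w) = 0 := by rw [hT3, step2]
    have h2 := (S.SA4 (g*w) hTA (g*w) hTA hTpos h3).1
    have h1 : (g*w)*1*(g*w) = 0 := by rw [mul_one, h2]
    have := (S.SA4 (g*w) hTA 1 S.one_mem S.pos_one h1).1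
    rwa [mul_one] at this
  have hwT0 : w*g = 0 := by rw [← hgwc, hT0]
  -- w ≤ lam•1
  have hwle : S.le w (lam•(1:R)) := S.negPart_le hv huA hwA hvpos hwpos hlam hdiff huw hwu
  have hwpos2 : S.le 0 (lam•(1:R) - w) :=
    (S.le_iff_pos hwA (S.smul_mem _ S.one_mem)).1 hwle
  -- final assembly
  have h1g : (1:R) - g ∈ S.A := S.sub_mem S.one_mem hgA
  have h1gpos : S.le 0 ((1:R) - g) := by
    have : ((1:R)-g)*(1-g) = 1-g := by noncomm_ring [hgg]
    have h := S.sq_nonneg (1-g) h1g; rwa [this] at h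
  have hconj : S.le 0 ((1-g)*(lam•(1:R) - w)*(1-g)) :=
    S.SA3 (1-g) h1g _ (S.sub_mem (S.smul_mem _ S.one_mem) hwA) h1gpos hwpos2
  have hfinal : v - lam•g = u + (1-g)*(lam•(1:R) - w)*(1-g) := by
    have e1 : (1-g)*(lam•(1:R) - w)*(1-g) = lam•((1-g)*(1-g)) - (1-g)*w*(1-g) := by
      have e0 : (1-g)*(lam•(1:R) - w) = lam•(1-g) - (1-g)*w := by
        rw [mul_sub, mul_smul_comm, mul_one]
      rw [e0, sub_mul, smul_mul_assoc]
    have e2 : ((1:R)-g)*(1-g) = 1-g := by noncomm_ring [hgg]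
    have e3 : (1-g)*w*(1-g) = w := by
      have : (1-g)*w = w - g*w := by noncomm_ring
      rw [this, hT0, sub_zero, mul_sub, mul_one, hwT0, sub_zero]
    rw [e1, e2, e3, hveq, smul_sub]
    abel
  rw [hfinal]
  exact S.pos_add huA (S.triple_mem h1g (S.sub_mem (S.smul_mem _ S.one_mem) hwA)) hupos hconj

end SynapticAlgebra
namespace SynapticAlgebra

variable {R : Type*} [Ring R] [Algebra ℝ R] (S : SynapticAlgebra R)

lemma eq_zero_of_le_all {a : R} (ha : a ∈ S.A) (hpos : S.le 0 a)
    (h : ∀ lam : ℝ, 0 < lam → S.le a (lam•(1:R))) : a = 0 := by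
  have harch : ∀ n : ℕ, S.le (n • a) 1 := by
    intro n
    cases n with
    | zero => simpa using S.pos_one
    | succ m =>
      have h1 : S.le a ((1/(m+1:ℝ))•(1:R)) := h _ (by positivity)
      have h2 := S.smul_mono (by positivity : (0:ℝ) ≤ (m+1:ℝ)) ha
        (S.smul_mem _ S.one_mem) h1
      rw [smul_smul] at h2
      have e : (m+1:ℝ) * (1/(m+1:ℝ)) = 1 := by field_simp
      rw [e, one_smul] at h2
      have e2 : ((m+1:ℕ) : ℝ) • a = (m+1:ℕ) • a := Nat.cast_smul_eq_nsmul ℝ _ a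
      rw [← e2]
      have e3 : ((m+1:ℕ) : ℝ) = (m+1:ℝ) := by push_cast; ring
      rw [e3]
      exact h2
  have hle0 := S.archimedean a ha 1 S.one_mem harch
  exact S.le_antisymm a ha 0 S.zero_mem hle0 hpos

theorem related_of_mul_ne_zero {p q : R} (hp : p ∈ S.Proj) (hq : q ∈ S.Proj)
    (hpq : p*q ≠ 0) : S.Related p q := by
  have hpA := hp.1; have hqA := hq.1
  obtain ⟨a, ha⟩ : ∃ a : R, a = p*q*p := ⟨_, rfl⟩
  have haA : a ∈ S.A := ha ▸ S.triple_mem hpA hqA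
  have hapos : S.le 0 a := ha ▸ S.SA3 p hpA q hqA (S.proj_pos hp) (S.proj_pos hq)
  have hpa : p*a = a := by
    rw [ha, ← mul_assoc, ← mul_assoc, hp.2]
  have hap : a*p = a := by
    rw [ha, mul_assoc (p*q) p p, hp.2]
  have ha0 : a ≠ 0 := by
    intro h0
    exact hpq ((S.SA4 p hpA q hqA (S.proj_pos hq) (ha.symm.trans h0)).1)
  -- choose lam
  have hlam : ∃ lam : ℝ, 0 < lam ∧ lam ≤ 1/2 ∧ ¬ S.le a (lam•(1:R)) := by
    by_contra hcon
    push_neg at hcon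
    apply ha0
    refine S.eq_zero_of_le_all haA hapos (fun lam hl => ?_)
    rcases le_or_gt lam (1/2) with hc | hc
    · exact hcon lam hl hc
    · have h1 := hcon (1/2) (by norm_num) (by norm_num)
      have h2 : S.le ((1/2:ℝ)•(1:R)) (lam•(1:R)) := S.smul_one_mono hc.le
      exact S.le_trans a haA _ (S.smul_mem _ S.one_mem) _ (S.smul_mem _ S.one_mem) h1 h2
  obtain ⟨lam, hlp, hlhalf, hnle⟩ := hlam
  -- positive part of a - lam•1
  obtain ⟨r, u, w, hrA, huA, hwA, hrpos, hupos, hwpos, hsum, hdiffx, huw, hwu, hry, hrr, htrans⟩ :=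
    S.posPart_spec (S.sub_mem haA (S.smul_mem lam S.one_mem))
  have hpx : p*(a - lam•(1:R)) = (a - lam•(1:R))*p := by
    rw [mul_sub, sub_mul, hpa, hap, mul_smul_comm, smul_mul_assoc, one_mul, mul_one]
  have hax : a*(a - lam•(1:R)) = (a - lam•(1:R))*a := by
    rw [mul_sub, sub_mul, mul_smul_comm, smul_mul_assoc, one_mul, mul_one]
  obtain ⟨hpu, hpw, hpr⟩ := htrans p hpA hpx
  obtain ⟨hau, haw, har⟩ := htrans a haA hax
  -- carrier e of u
  obtain ⟨e, heA, hee, hue, heu, hiffu⟩ := S.carrier_spec huA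
  have he_proj : e ∈ S.Proj := ⟨heA, hee⟩
  have hepos := S.proj_pos he_proj
  have hew : e*w = 0 := by
    have h1 : u*w = 0 := huw
    exact (hiffu w hwA).1 h1
  have hwe : w*e = 0 := S.flip_zero heA hwA hwpos hew
  have hxe : (a - lam•(1:R))*e = u := by rw [hdiffx, sub_mul, hue, hwe, sub_zero]
  have hae2 : a*e = lam•e + u := by
    have e1 : a*e = (a - lam•(1:R))*e + lam•e := by
      rw [sub_mul, smul_mul_assoc, one_mul]; abel
    rw [e1, hxe]; abel
  have haec : a*e = e*a :=
    S.comm_carrier huA hupos haA hau heA hee hue heu hiffu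
  have hpec : p*e = e*p :=
    S.comm_carrier huA hupos hpA hpu heA hee hue heu hiffu
  have he0 : e ≠ 0 := by
    intro h0
    apply hnle
    have hu0 : u = 0 := by rw [← hue, h0, mul_zero]
    rw [S.le_iff_pos haA (S.smul_mem _ S.one_mem)]
    have e1 : lam•(1:R) - a = w := by
      rw [hu0, zero_sub] at hdiffx
      rw [← neg_sub a, hdiffx, neg_neg]
    rw [e1]; exact hwpos
  -- e ≤ p
  have hep : S.le e p := by
    have h1pA : (1:R) - p ∈ S.A := S.sub_mem S.one_mem hpA
    have h1ppos := S.proj_pos (S.proj_compl hp)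
    have hza : (1-p)*a = 0 := by rw [sub_mul, hpa, one_mul, sub_self]
    have h1 : (1-p)*(a*e)*(1-p) = 0 := by
      rw [← mul_assoc, hza, zero_mul, zero_mul]
    rw [hae2] at h1
    have h2 : lam•((1-p)*e*(1-p)) + (1-p)*u*(1-p) = 0 := by
      rw [← h1, mul_add, add_mul, mul_smul_comm, smul_mul_assoc]
    have p1 := S.SA3 (1-p) h1pA e heA h1ppos hepos
    have p2 := S.SA3 (1-p) h1pA u huA h1ppos hupos
    have hz := S.pos_sum_zero (S.smul_mem _ (S.triple_mem h1pA heA)) (S.triple_mem h1pA huA)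
      (S.smul_nonneg lam hlp.le _ (S.triple_mem h1pA heA) p1) p2 h2
    have hzez : (1-p)*e*(1-p) = 0 := by
      rcases smul_eq_zero.mp hz.1 with h' | h'
      · exact absurd h' (ne_of_gt hlp)
      · exact h'
    obtain ⟨e1, e2⟩ := S.SA4 (1-p) h1pA e heA hepos hzez
    refine S.proj_le_of_mul he_proj hp ?_ ?_
    · have : e*(1-p) = e - e*p := by noncomm_ring
      rw [this] at e2; exact (sub_eq_zero.mp e2).symm
    · have : (1-p)*e = e - p*e := by noncomm_ring
      rw [this] at e1; exact (sub_eq_zero.mp e1).symm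
  obtain ⟨hep1, hep2⟩ := S.mul_of_proj_le he_proj hp hep
  -- e*q*e = lam•e + u
  have heqe : e*q*e = lam•e + u := by
    have h1 : e*a*e = e*q*e := by
      calc e*a*e = e*(p*q*p)*e := by rw [ha]
        _ = (e*p)*q*(p*e) := by noncomm_ring
        _ = e*q*e := by rw [hep1, hep2]
    have h2 : e*a*e = lam•e + u := by
      calc e*a*e = (a*e)*e := by rw [haec]
        _ = a*(e*e) := by rw [mul_assoc]
        _ = a*e := by rw [hee]
        _ = lam•e + u := hae2
    rw [← h1, h2]
  -- c := q*e*q and its carrier g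
  obtain ⟨c, hc⟩ : ∃ c : R, c = q*e*q := ⟨_, rfl⟩
  have hcA : c ∈ S.A := hc ▸ S.triple_mem hqA heA
  have hcpos : S.le 0 c := hc ▸ S.SA3 q hqA e heA (S.proj_pos hq) hepos
  have hqc : q*c = c := by
    rw [hc, ← mul_assoc, ← mul_assoc, hq.2]
  have hcq : c*q = c := by
    rw [hc, mul_assoc (q*e) q q, hq.2]
  obtain ⟨g, hgA, hgg, hcg, hgc, hiffc⟩ := S.carrier_spec hcA
  have hg_proj : g ∈ S.Proj := ⟨hgA, hgg⟩
  have hgpos := S.proj_pos hg_proj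
  -- g ≤ q
  have hc1q : c*(1-q) = 0 := by rw [mul_sub, hcq, mul_one, sub_self]
  have hg1q : g*(1-q) = 0 := (hiffc (1-q) (S.sub_mem S.one_mem hqA)).1 hc1q
  have h1qg : (1-q)*g = 0 :=
    S.flip_zero hgA (S.sub_mem S.one_mem hqA) (S.proj_pos (S.proj_compl hq)) hg1q
  have hgq1 : g*q = g := by
    have : g*(1-q) = g - g*q := by noncomm_ring
    rw [this] at hg1q; exact (sub_eq_zero.mp hg1q).symm
  have hgq2 : q*g = g := by
    have : (1-q)*g = g - q*g := by noncomm_ring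
    rw [this] at h1qg; exact (sub_eq_zero.mp h1qg).symm
  have hgq : S.le g q := S.proj_le_of_mul hg_proj hq hgq1 hgq2
  -- c ≤ 1 and c ≤ g
  have hcle1 : S.le 0 ((1:R) - c) := by
    have e1 : q - c = q*(1-e)*q := by rw [hc]; noncomm_ring [hq.2]
    have p1 : S.le 0 (q - c) := by
      rw [e1]
      exact S.SA3 q hqA (1-e) (S.sub_mem S.one_mem heA) (S.proj_pos hq)
        (S.proj_pos (S.proj_compl he_proj))
    have p2 := S.proj_pos (S.proj_compl hq)
    have := S.pos_add (S.sub_mem S.one_mem hqA) (S.sub_mem hqA hcA) p2 p1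
    have e2 : ((1:R) - q) + (q - c) = 1 - c := by abel
    rwa [e2] at this
  have hgc_pos : S.le 0 (g - c) := by
    have e1 : g*(1-c)*g = g - c := by
      calc g*(1-c)*g = (g - g*c)*g := by noncomm_ring
        _ = (g - c)*g := by rw [hgc]
        _ = g*g - c*g := by rw [sub_mul]
        _ = g - c := by rw [hgg, hcg]
    have := S.SA3 g hgA (1-c) (S.sub_mem S.one_mem hcA) hgpos hcle1
    rwa [e1] at this
  -- nonzero
  have hc0 : c ≠ 0 := by
    intro h0
    have hqe : q*e*q = 0 := hc.symm.trans h0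
    have h1 := (S.SA4 q hqA e heA hepos hqe).1
    have h2 : e*q = 0 := S.flip_zero hqA heA hepos h1
    have h3 : e*q*e = 0 := by rw [h2, zero_mul]
    rw [heqe] at h3
    have := S.pos_sum_zero (S.smul_mem _ heA) huA
      (S.smul_nonneg lam hlp.le e heA hepos) hupos h3
    have he' : e = 0 := by
      rcases smul_eq_zero.mp this.1 with h' | h'
      · exact absurd h' (ne_of_gt hlp)
      · exact h'
    exact he0 he'
  have hg0 : g ≠ 0 := by
    intro h0
    apply hc0
    rw [← hcg, h0, mul_zero]
  -- c*c ≥ lam•c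
  have hsq_c : S.le 0 (c*c - lam•c) := by
    have e1 : c*c = lam•c + q*u*q := by
      calc c*c = q*(e*q*e)*q := by rw [hc]; simp only [mul_assoc, idem_mul' hq.2]
        _ = q*(lam•e + u)*q := by rw [heqe]
        _ = lam•(q*e*q) + q*u*q := by
            rw [mul_add, add_mul, mul_smul_comm, smul_mul_assoc]
        _ = lam•c + q*u*q := by rw [← hc]
    have e2 : c*c - lam•c = q*u*q := by rw [e1]; abel
    rw [e2]
    exact S.SA3 q hqA u huA (S.proj_pos hq) hupos
  have hclb : S.le 0 (c - lam•g) :=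
    S.carrier_lower_bound hcA hcpos hlp hsq_c hgA hgg hcg hgc hiffc
  -- bound 1 : e*g*e ≥ lam²•e
  have hbound1 : S.le 0 (e*g*e - (lam*lam)•e) := by
    have hXX : e*c*e = (lam*lam)•e + ((2*lam)•u + u*u) := by
      have e1 : e*c*e = (e*q*e)*(e*q*e) := by
        rw [hc]; simp only [mul_assoc, idem_mul' hee]
      have e2 : (lam•e + u)*(lam•e + u) = (lam*lam)•e + ((2*lam)•u + u*u) := by
        have f1 : e*(lam•e + u) = lam•e + u := by
          rw [mul_add, mul_smul_comm, hee, heu]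
        have f2 : u*(lam•e + u) = lam•u + u*u := by
          rw [mul_add, mul_smul_comm, hue]
        rw [add_mul, smul_mul_assoc, f1, f2, smul_add, smul_smul]
        module
      rw [e1, heqe, e2]
    have p1 : S.le 0 (e*c*e - (lam*lam)•e) := by
      have e3 : e*c*e - (lam*lam)•e = (2*lam)•u + u*u := by rw [hXX]; abel
      rw [e3]
      exact S.pos_add (S.smul_mem _ huA) (S.sq_mem _ huA)
        (S.smul_nonneg _ (by positivity) _ huA hupos) (S.sq_nonneg u huA)
    have p2 : S.le 0 (e*g*e - e*c*e) := by
      have e4 : e*(g-c)*e = e*g*e - e*c*e := by noncomm_ring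
      have := S.SA3 e heA (g-c) (S.sub_mem hgA hcA) hepos hgc_pos
      rwa [e4] at this
    have := S.pos_add (S.sub_mem (S.triple_mem heA hgA) (S.triple_mem heA hcA))
      (S.sub_mem (S.triple_mem heA hcA) (S.smul_mem _ heA)) p2 p1
    have e5 : (e*g*e - e*c*e) + (e*c*e - (lam*lam)•e) = e*g*e - (lam*lam)•e := by abel
    rwa [e5] at this
  -- bound 2 : (1-e)*g*(1-e) ≤ (1-lam)•(1-e)
  have h1eA : (1:R) - e ∈ S.A := S.sub_mem S.one_mem heA
  have h1epos := S.proj_pos (S.proj_compl he_proj)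
  have hβA : (1-e)*g*(1-e) ∈ S.A := S.triple_mem h1eA hgA
  have hbound2 : S.le 0 ((1-lam)•((1:R)-e) - (1-e)*g*(1-e)) := by
    have hgeg : S.le 0 (g*e*g - lam•g) := by
      have e1 : g*c*g = g*e*g := by
        calc g*c*g = (g*q)*e*(q*g) := by rw [hc]; noncomm_ring
          _ = g*e*g := by rw [hgq1, hgq2]
      have e2 : g*(c - lam•g)*g = g*c*g - lam•g := by
        have f1 : g*(c - lam•g) = g*c - lam•g := by
          rw [mul_sub, mul_smul_comm, hgg]
        rw [f1, sub_mul, smul_mul_assoc, hgg]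
      have := S.SA3 g hgA (c - lam•g) (S.sub_mem hcA (S.smul_mem _ hgA)) hgpos hclb
      rw [e2, e1] at this
      exact this
    -- α := g*(1-e)*g ≤ (1-lam)•g
    have hαbound : S.le 0 ((1-lam)•g - g*(1-e)*g) := by
      have e1 : g*(1-e)*g = g - g*e*g := by noncomm_ring [hgg]
      have e2 : (1-lam)•g - (g - g*e*g) = g*e*g - lam•g := by module
      rw [e1, e2]
      exact hgeg
    -- β := (1-e)*g*(1-e) satisfies β² ≤ (1-lam)•β
    have hβpos : S.le 0 ((1-e)*g*(1-e)) := S.SA3 (1-e) h1eA g hgA h1epos hgpos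
    have hββ : S.le 0 ((1-lam)•((1-e)*g*(1-e)) - ((1-e)*g*(1-e))*((1-e)*g*(1-e))) := by
      have h1e_idem : ((1:R)-e)*(1-e) = 1-e := by noncomm_ring [hee]
      have e1 : ((1-e)*g*(1-e))*((1-e)*g*(1-e)) = (1-e)*(g*(1-e)*g)*(1-e) := by
        simp only [mul_assoc, idem_mul' h1e_idem]
      have e2 : (1-e)*((1-lam)•g - g*(1-e)*g)*(1-e)
          = (1-lam)•((1-e)*g*(1-e)) - (1-e)*(g*(1-e)*g)*(1-e) := by
        have f1 : (1-e)*((1-lam)•g - g*(1-e)*g) = (1-lam)•((1-e)*g) - (1-e)*(g*(1-e)*g) := by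
          rw [mul_sub, mul_smul_comm]
        rw [f1, sub_mul, smul_mul_assoc]
      have := S.SA3 (1-e) h1eA _ (S.sub_mem (S.smul_mem _ hgA) (S.triple_mem hgA h1eA))
        h1epos hαbound
      rw [e2, ← e1] at this
      exact this
    have hκ : (0:ℝ) < 1 - lam := by linarith
    have hβle := S.le_of_sq hβA hβpos hκ hββ
    have hβle' := (S.le_iff_pos hβA (S.smul_mem _ S.one_mem)).1 hβle
    have hconj := S.SA3 (1-e) h1eA _ (S.sub_mem (S.smul_mem _ S.one_mem) hβA) h1epos hβle'
    have e3 : (1-e)*((1-lam)•(1:R) - (1-e)*g*(1-e))*(1-e)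
        = (1-lam)•((1:R)-e) - (1-e)*g*(1-e) := by
      have f1 : (1-e)*((1-lam)•(1:R) - (1-e)*g*(1-e)) = (1-lam)•(1-e) - (1-e)*((1-e)*g*(1-e)) := by
        rw [mul_sub, mul_smul_comm, mul_one]
      rw [f1, sub_mul, smul_mul_assoc]
      have h1e_idem : ((1:R)-e)*(1-e) = 1-e := by noncomm_ring [hee]
      have f3 : (1-e)*((1-e)*g*(1-e))*(1-e) = (1-e)*g*(1-e) := by
        simp only [mul_assoc, idem_mul' h1e_idem, h1e_idem]
      rw [h1e_idem, f3]
    rw [e3] at hconj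
    exact hconj
  -- t := e + g - 1, t² ≥ (lam*lam)•1
  obtain ⟨t, ht⟩ : ∃ t : R, t = e + g - 1 := ⟨_, rfl⟩
  have htA : t ∈ S.A := ht ▸ S.sub_mem (S.add_mem heA hgA) S.one_mem
  have hmA : t*t ∈ S.A := S.sq_mem t htA
  have hmpos : S.le 0 (t*t) := S.sq_nonneg t htA
  have hterm : t*t = 1 - e - g + e*g + g*e := by rw [ht]; noncomm_ring [hee, hgg]
  have htsq : S.le 0 (t*t - (lam*lam)•(1:R)) := by
    have hβexp : (1-e)*g*(1-e) = g - e*g - g*e + e*g*e := by noncomm_ring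
    have hsum3 : S.le 0 ((e*g*e - (lam*lam)•e) + (((1-lam)•((1:R)-e) - (1-e)*g*(1-e))
        + ((lam - lam*lam)•((1:R)-e)))) := by
      refine S.pos_add (S.sub_mem (S.triple_mem heA hgA) (S.smul_mem _ heA))
        (S.add_mem (S.sub_mem (S.smul_mem _ h1eA) hβA) (S.smul_mem _ h1eA))
        hbound1 (S.pos_add (S.sub_mem (S.smul_mem _ h1eA) hβA) (S.smul_mem _ h1eA)
          hbound2 (S.smul_nonneg _ (by nlinarith) _ h1eA h1epos))
    have e6 : (e*g*e - (lam*lam)•e) + (((1-lam)•((1:R)-e) - (1-e)*g*(1-e))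
        + ((lam - lam*lam)•((1:R)-e))) = t*t - (lam*lam)•(1:R) := by
      rw [hterm, hβexp]
      module
    rwa [e6] at hsum3
  -- invert m := t*t
  have hδ : (0:ℝ) < lam*lam := by positivity
  have hinv1 : S.le 1 ((lam*lam)⁻¹•(t*t)) := by
    rw [S.le_iff_pos S.one_mem (S.smul_mem _ hmA)]
    have e1 : (lam*lam)⁻¹•(t*t) - 1 = (lam*lam)⁻¹•(t*t - (lam*lam)•(1:R)) := by
      rw [smul_sub, smul_smul, inv_mul_cancel₀ (ne_of_gt hδ), one_smul]
    rw [e1]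
    exact S.smul_nonneg _ (by positivity) _ (S.sub_mem hmA (S.smul_mem _ S.one_mem)) htsq
  obtain ⟨b, hbA, hb1, hb2⟩ := S.SA7 _ (S.smul_mem _ hmA) hinv1
  obtain ⟨k, hk⟩ : ∃ k : R, k = (lam*lam)⁻¹•b := ⟨_, rfl⟩
  have hkA : k ∈ S.A := hk ▸ S.smul_mem _ hbA
  have hmk : (t*t)*k = 1 := by
    rw [hk, mul_smul_comm]
    rw [smul_mul_assoc] at hb1
    exact hb1
  have hkm : k*(t*t) = 1 := by
    rw [hk, smul_mul_assoc]
    rw [mul_smul_comm] at hb2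
    exact hb2
  have hkcomm : ∀ c : R, c*(t*t) = (t*t)*c → c*k = k*c := by
    intro x hx
    calc x*k = (k*(t*t))*(x*k) := by rw [hkm, one_mul]
      _ = k*(((t*t)*x)*k) := by noncomm_ring
      _ = k*((x*(t*t))*k) := by rw [hx]
      _ = (k*x)*((t*t)*k) := by noncomm_ring
      _ = k*x := by rw [hmk, mul_one]
  have hem : e*(t*t) = (t*t)*e := by
    rw [hterm]
    simp only [mul_add, add_mul, mul_sub, sub_mul, mul_one, one_mul]
    simp only [mul_assoc, idem_mul' hee, hee]
    abel
  have hgm : g*(t*t) = (t*t)*g := by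
    rw [hterm]
    simp only [mul_add, add_mul, mul_sub, sub_mul, mul_one, one_mul]
    simp only [mul_assoc, idem_mul' hgg, hgg, idem_mul' hee, hee]
    abel
  have htm : t*(t*t) = (t*t)*t := by rw [← mul_assoc, mul_assoc]
  have hek : e*k = k*e := hkcomm e hem
  have hgk : g*k = k*g := hkcomm g hgm
  have htk : t*k = k*t := hkcomm t htm
  have hkmcomm : k*(t*t) = (t*t)*k := by rw [hkm, hmk]
  -- square root of t*t
  obtain ⟨rt, hrtA, hrtpos, hrtm, hrtc⟩ := S.sqrt_spec hmA hmpos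
  have hrte : rt*e = e*rt := hrtc e heA hem
  have hrtg : rt*g = g*rt := hrtc g hgA hgm
  have hrtt : rt*t = t*rt := hrtc t htA htm
  have hrtk : rt*k = k*rt := hrtc k hkA hkmcomm
  -- ι := k*rt
  have hιA : k*rt ∈ S.A := S.cmul_mem hkA hrtA hrtk.symm
  have hι2 : (k*rt)*(k*rt) = k := by
    calc (k*rt)*(k*rt) = k*(rt*k)*rt := by noncomm_ring
      _ = k*(k*rt)*rt := by rw [hrtk]
      _ = (k*k)*(rt*rt) := by noncomm_ring
      _ = (k*k)*(t*t) := by rw [hrtm]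
      _ = k*(k*(t*t)) := by rw [mul_assoc]
      _ = k := by rw [hkm, mul_one]
  have hcomm_tι : t*(k*rt) = (k*rt)*t := by
    calc t*(k*rt) = (t*k)*rt := by rw [mul_assoc]
      _ = (k*t)*rt := by rw [htk]
      _ = k*(t*rt) := by rw [mul_assoc]
      _ = k*(rt*t) := by rw [hrtt]
      _ = (k*rt)*t := by rw [mul_assoc]
  have hsA : t*(k*rt) ∈ S.A := S.cmul_mem htA hιA hcomm_tι
  have hss : (t*(k*rt))*(t*(k*rt)) = 1 := by
    calc (t*(k*rt))*(t*(k*rt)) = t*(((k*rt)*t)*(k*rt)) := by noncomm_ring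
      _ = t*((t*(k*rt))*(k*rt)) := by rw [hcomm_tι]
      _ = (t*t)*((k*rt)*(k*rt)) := by noncomm_ring
      _ = (t*t)*k := by rw [hι2]
      _ = 1 := hmk
  have hsym : S.IsSymmetry (t*(k*rt)) := ⟨hsA, hss⟩
  -- s*e*s = g
  have hιe : (k*rt)*e = e*(k*rt) := by
    calc (k*rt)*e = k*(rt*e) := by rw [mul_assoc]
      _ = k*(e*rt) := by rw [hrte]
      _ = (k*e)*rt := by rw [mul_assoc]
      _ = (e*k)*rt := by rw [hek]
      _ = e*(k*rt) := by rw [mul_assoc]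
  have htet : t*e*t = g*e*g := by rw [ht]; noncomm_ring [hee]
  have hmg : (t*t)*g = g*e*g := by rw [ht]; noncomm_ring [hee, hgg]
  have hses : (t*(k*rt))*e*(t*(k*rt)) = g := by
    have c4 : (k*rt)*(t*(k*rt)) = t*((k*rt)*(k*rt)) := by
      calc (k*rt)*(t*(k*rt)) = ((k*rt)*t)*(k*rt) := by rw [← mul_assoc]
        _ = (t*(k*rt))*(k*rt) := by rw [hcomm_tι]
        _ = t*((k*rt)*(k*rt)) := by rw [mul_assoc]
    calc (t*(k*rt))*e*(t*(k*rt)) = (t*((k*rt)*e))*(t*(k*rt)) := by noncomm_ring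
      _ = (t*(e*(k*rt)))*(t*(k*rt)) := by rw [hιe]
      _ = (t*e)*((k*rt)*(t*(k*rt))) := by noncomm_ring
      _ = (t*e)*(t*((k*rt)*(k*rt))) := by rw [c4]
      _ = (t*e)*(t*k) := by rw [hι2]
      _ = (t*e*t)*k := by noncomm_ring
      _ = (g*e*g)*k := by rw [htet]
      _ = ((t*t)*g)*k := by rw [hmg]
      _ = (t*t)*(g*k) := by rw [mul_assoc]
      _ = (t*t)*(k*g) := by rw [hgk]
      _ = ((t*t)*k)*g := by noncomm_ring
      _ = g := by rw [hmk, one_mul]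
  exact ⟨e, he_proj, g, hg_proj, he0, hg0, hep, hgq,
    Relation.ReflTransGen.single ⟨t*(k*rt), hsym, hses⟩⟩

end SynapticAlgebra
namespace SynapticAlgebra

variable {R : Type*} [Ring R] [Algebra ℝ R] (S : SynapticAlgebra R)

lemma dyadic_step {d : R} (hd : d ∈ S.A) (hdpos : S.le 0 d) {t : ℝ} (ht : 0 < t)
    (hdle : S.le d (t•(1:R))) :
    ∃ p : R, p ∈ S.Proj ∧ S.le 0 (d - (t/2)•p) ∧ S.le (d - (t/2)•p) ((t/2)•(1:R)) ∧
      (∀ c ∈ S.A, c*d = d*c → c*p = p*c) := by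
  have hxA : d - (t/2)•(1:R) ∈ S.A := S.sub_mem hd (S.smul_mem _ S.one_mem)
  obtain ⟨r, u, v, hrA, huA, hvA, hrpos, hupos, hvpos, hsum, hdiff, huv, hvu, hry, hrr, htrans⟩ :=
    S.posPart_spec hxA
  obtain ⟨p, hpA, hpp, hup, hpu, hiffu⟩ := S.carrier_spec huA
  have hp_proj : p ∈ S.Proj := ⟨hpA, hpp⟩
  have hppos := S.proj_pos hp_proj
  have hpv : p*v = 0 := (hiffu v hvA).1 huv
  have hvp : v*p = 0 := S.flip_zero' hvA hpA hppos hpv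
  have hxp : (d - (t/2)•(1:R))*p = u := by rw [hdiff, sub_mul, hup, hvp, sub_zero]
  have hpx : p*(d - (t/2)•(1:R)) = u := by
    have e : p*(u - v) = u := by rw [mul_sub, hpu, hpv, sub_zero]
    rw [hdiff, e]
  have hdp : d*p = u + (t/2)•p := by
    have e : d*p = (d - (t/2)•(1:R))*p + (t/2)•p := by
      rw [sub_mul, smul_mul_assoc, one_mul]; abel
    rw [e, hxp]
  have hpd : p*d = u + (t/2)•p := by
    have e : p*d = p*(d - (t/2)•(1:R)) + (t/2)•p := by
      rw [mul_sub, mul_smul_comm, mul_one]; abel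
    rw [e, hpx]
  have hpdp : p*d*p = u + (t/2)•p := by
    rw [hpd, add_mul, hup, smul_mul_assoc, hpp]
  -- d and p commute
  have hcomm : ∀ c ∈ S.A, c*d = d*c → c*p = p*c := by
    intro c hc hcd
    have hcx : c*(d - (t/2)•(1:R)) = (d - (t/2)•(1:R))*c := by
      rw [mul_sub, sub_mul, hcd, mul_smul_comm, smul_mul_assoc, one_mul, mul_one]
    have hcu := (htrans c hc hcx).1
    exact S.comm_carrier huA hupos hc hcu hpA hpp hup hpu hiffu
  -- positivity of d'
  have h1pA : (1:R) - p ∈ S.A := S.sub_mem S.one_mem hpA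
  have h1ppos := S.proj_pos (S.proj_compl hp_proj)
  have hmain : d - (t/2)•p = u + (1-p)*d*(1-p) := by
    have f1 : (1-p)*d*(1-p) = d - p*d - d*p + p*d*p := by noncomm_ring
    rw [f1, hpdp, hpd, hdp]
    abel
  have hpos' : S.le 0 (d - (t/2)•p) := by
    rw [hmain]
    exact S.pos_add huA (S.triple_mem h1pA hd) hupos
      (S.SA3 (1-p) h1pA d hd h1ppos hdpos)
  -- upper bound
  have htd : S.le 0 (t•(1:R) - d) := (S.le_iff_pos hd (S.smul_mem _ S.one_mem)).1 hdle
  have e2 : (t/2)•(1:R) - (d - (t/2)•(1:R)) = t•(1:R) - d := by module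
  have hpxp : S.le 0 ((t/2)•p - u) := by
    have f1 : p*((t/2)•(1:R) - (d - (t/2)•(1:R))) = (t/2)•p - u := by
      rw [mul_sub, mul_smul_comm, mul_one, hpx]
    have e1 : p*((t/2)•(1:R) - (d - (t/2)•(1:R)))*p = (t/2)•p - u := by
      rw [f1, sub_mul, smul_mul_assoc, hpp, hup]
    rw [← e1]
    refine S.SA3 p hpA _ (S.sub_mem (S.smul_mem _ S.one_mem) hxA) hppos ?_
    rw [e2]; exact htd
  have hdeq : d = u - v + (t/2)•(1:R) := by rw [← hdiff]; abel
  have hub : S.le (d - (t/2)•p) ((t/2)•(1:R)) := by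
    rw [S.le_iff_pos (S.sub_mem hd (S.smul_mem _ hpA)) (S.smul_mem _ S.one_mem)]
    have e3 : (t/2)•(1:R) - (d - (t/2)•p) = ((t/2)•p - u) + v := by
      rw [hdeq]; module
    rw [e3]
    exact S.pos_add (S.sub_mem (S.smul_mem _ hpA) huA) hvA hpxp hvpos
  exact ⟨p, hp_proj, hpos', hub, hcomm⟩

end SynapticAlgebra
namespace SynapticAlgebra

variable {R : Type*} [Ring R] [Algebra ℝ R] (S : SynapticAlgebra R)

/-- Invariant for the dyadic approximation sequence. -/
def GoodAux (S : SynapticAlgebra R) (a h : R) (n : ℕ) (ds : R × R) : Prop :=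
  ds.1 ∈ S.A ∧ ds.2 ∈ S.A ∧ ds.1 + ds.2 = a ∧ S.le 0 ds.1 ∧
    S.le ds.1 (((1/2:ℝ)^n)•(1:R)) ∧
    (∀ c ∈ S.A, c*a = a*c → c*ds.1 = ds.1*c ∧ c*ds.2 = ds.2*c) ∧
    h*ds.2 = ds.2*h

lemma central_of_proj_comm {h : R} (hhA : h ∈ S.A)
    (hcp : ∀ p ∈ S.Proj, h*p = p*h) : S.IsCentral h := by
  have main : ∀ a ∈ S.A, S.le 0 a → S.le a ((1:ℝ)•(1:R)) → a*h = h*a := by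
    intro a haA hapos hale
    have base : S.GoodAux a h 0 (a, 0) := by
      refine ⟨haA, S.zero_mem, add_zero a, hapos, by simpa using hale, ?_, ?_⟩
      · intro c hc hca
        exact ⟨hca, by rw [mul_zero, zero_mul]⟩
      · rw [mul_zero, zero_mul]
    have step : ∀ (n : ℕ) (ds : R × R), S.GoodAux a h n ds →
        ∃ ds' : R × R, S.GoodAux a h (n+1) ds' ∧ S.le ds.2 ds'.2 := by
      intro n ds hG
      obtain ⟨hdA, hsA, hdssum, hdpos, hdle, hctrans, hhs⟩ := hG
      have ht : (0:ℝ) < (1/2:ℝ)^n := by positivity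
      obtain ⟨p, hp_proj, hd'pos, hd'le, hpcomm⟩ := S.dyadic_step hdA hdpos ht hdle
      have hpow : ((1/2:ℝ)^n)/2 = (1/2:ℝ)^(n+1) := by rw [pow_succ]; ring
      refine ⟨(ds.1 - ((1/2:ℝ)^n/2)•p, ds.2 + ((1/2:ℝ)^n/2)•p), ⟨?_, ?_, ?_, hd'pos, ?_, ?_, ?_⟩, ?_⟩
      · exact S.sub_mem hdA (S.smul_mem _ hp_proj.1)
      · exact S.add_mem hsA (S.smul_mem _ hp_proj.1)
      · show (ds.1 - ((1/2:ℝ)^n/2)•p) + (ds.2 + ((1/2:ℝ)^n/2)•p) = a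
        rw [← hdssum]; abel
      · show S.le (ds.1 - ((1/2:ℝ)^n/2)•p) (((1/2:ℝ)^(n+1))•(1:R))
        rw [← hpow]; exact hd'le
      · intro c hc hca
        obtain ⟨hcd, hcs⟩ := hctrans c hc hca
        have hcp' : c*p = p*c := hpcomm c hc hcd
        constructor
        · show c*(ds.1 - ((1/2:ℝ)^n/2)•p) = (ds.1 - ((1/2:ℝ)^n/2)•p)*c
          rw [mul_sub, sub_mul, hcd, mul_smul_comm, smul_mul_assoc, hcp']
        · show c*(ds.2 + ((1/2:ℝ)^n/2)•p) = (ds.2 + ((1/2:ℝ)^n/2)•p)*c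
          rw [mul_add, add_mul, hcs, mul_smul_comm, smul_mul_assoc, hcp']
      · show h*(ds.2 + ((1/2:ℝ)^n/2)•p) = (ds.2 + ((1/2:ℝ)^n/2)•p)*h
        have hhp := hcp p hp_proj
        rw [mul_add, add_mul, hhs, mul_smul_comm, smul_mul_assoc, hhp]
      · show S.le ds.2 (ds.2 + ((1/2:ℝ)^n/2)•p)
        rw [S.le_iff_pos hsA (S.add_mem hsA (S.smul_mem _ hp_proj.1))]
        have e : (ds.2 + ((1/2:ℝ)^n/2)•p) - ds.2 = ((1/2:ℝ)^n/2)•p := by abel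
        rw [e]
        exact S.smul_nonneg _ (by positivity) p hp_proj.1 (S.proj_pos hp_proj)
    choose F hF1 hF2 using step
    let seq : (n : ℕ) → {ds : R × R // S.GoodAux a h n ds} := fun n =>
      Nat.rec ⟨(a, 0), base⟩ (fun m prev => ⟨F m prev.1 prev.2, hF1 m prev.1 prev.2⟩) n
    have hGn : ∀ n, S.GoodAux a h n (seq n).1 := fun n => (seq n).2
    have hsucc : ∀ n, (seq (n+1)).1 = F n (seq n).1 (seq n).2 := fun n => rfl
    have hsa : ∀ n, a*((seq n).1.2) = ((seq n).1.2)*a :=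
      fun n => ((hGn n).2.2.2.2.2.1 a haA rfl).2
    have hmem : ∀ n, (seq n).1.2 ∈ S.A := fun n => (hGn n).2.1
    refine S.SA8 a haA h hhA (fun n => (seq n).1.2) hmem
      (fun n => ((hGn n).2.2.2.2.2.2).symm) ?_ ?_ ?_
    · intro n m
      exact ((hGn m).2.2.2.2.2.1 _ (hmem n) (hsa n).symm).2
    · intro n
      have := hF2 n (seq n).1 (seq n).2
      rwa [← hsucc n] at this
    · intro ε hε
      obtain ⟨N, hN⟩ := exists_pow_lt_of_lt_one hε (by norm_num : (1/2:ℝ) < 1)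
      refine ⟨N, fun n hn => ?_⟩
      have ednf : a - (seq n).1.2 = (seq n).1.1 :=
        (eq_sub_of_add_eq (hGn n).2.2.1).symm
      have hpowle : ((1/2:ℝ)^n) ≤ ε := by
        calc ((1/2:ℝ)^n) ≤ (1/2:ℝ)^N :=
              pow_le_pow_of_le_one (by norm_num) (by norm_num) hn
          _ ≤ ε := hN.le
      constructor
      · rw [ednf]
        refine S.le_trans _ (hGn n).1 _ (S.smul_mem _ S.one_mem) _
          (S.smul_mem _ S.one_mem) ((hGn n).2.2.2.2.1) (S.smul_one_mono hpowle)
      · rw [ednf]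
        have h1 : S.le ((-ε)•(1:R)) 0 := by
          rw [S.le_iff_pos (S.smul_mem _ S.one_mem) S.zero_mem]
          have e : (0:R) - (-ε)•(1:R) = ε•(1:R) := by module
          rw [e]
          exact S.pos_smul_one hε.le
        exact S.le_trans _ (S.smul_mem _ S.one_mem) _ S.zero_mem _ (hGn n).1
          h1 ((hGn n).2.2.2.1)
  -- reduce general a to normalized
  intro aa haa
  obtain ⟨r1, hr1⟩ := S.orderUnit aa haa
  obtain ⟨r2, hr2⟩ := S.orderUnit (-aa) (S.neg_mem haa)
  have hm0 : (0:ℝ) ≤ max (max r1 r2) 0 := le_max_right _ _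
  set σ : ℝ := max (max r1 r2) 0 + 1 with hσdef
  have hσ : (0:ℝ) < σ := by rw [hσdef]; linarith
  have hr1σ : r1 ≤ σ := by
    have := le_max_left r1 r2
    have := le_max_left (max r1 r2) 0
    rw [hσdef]; linarith
  have hr2σ : r2 ≤ σ := by
    have := le_max_right r1 r2
    have := le_max_left (max r1 r2) 0
    rw [hσdef]; linarith
  have hub : S.le aa (σ•(1:R)) :=
    S.le_trans aa haa _ (S.smul_mem _ S.one_mem) _ (S.smul_mem _ S.one_mem) hr1
      (S.smul_one_mono hr1σ)
  have hlb : S.le 0 (aa + σ•(1:R)) := by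
    have h2 : S.le (-aa) (σ•(1:R)) :=
      S.le_trans _ (S.neg_mem haa) _ (S.smul_mem _ S.one_mem) _ (S.smul_mem _ S.one_mem) hr2
        (S.smul_one_mono hr2σ)
    have := (S.le_iff_pos (S.neg_mem haa) (S.smul_mem _ S.one_mem)).1 h2
    have e : σ•(1:R) - (-aa) = aa + σ•(1:R) := by abel
    rwa [e] at this
  have haaσ : aa + σ•(1:R) ∈ S.A := S.add_mem haa (S.smul_mem _ S.one_mem)
  have ha₀A : (1/(2*σ))•(aa + σ•(1:R)) ∈ S.A := S.smul_mem _ haaσ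
  have ha₀pos : S.le 0 ((1/(2*σ))•(aa + σ•(1:R))) :=
    S.smul_nonneg _ (by positivity) _ haaσ hlb
  have e0 : (σ•(1:R) - aa) + (aa + σ•(1:R)) = (2*σ)•(1:R) := by module
  have e1 : ((1:ℝ)/(2*σ)) * (2*σ) = 1 := by field_simp
  have e2 : (1/(2*σ))•(σ•(1:R) - aa) + (1/(2*σ))•(aa + σ•(1:R)) = (1:ℝ)•(1:R) := by
    rw [← smul_add, e0, smul_smul, e1]
  have ha₀le : S.le ((1/(2*σ))•(aa + σ•(1:R))) ((1:ℝ)•(1:R)) := by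
    rw [S.le_iff_pos ha₀A (S.smul_mem _ S.one_mem)]
    have key : (1:ℝ)•(1:R) - (1/(2*σ))•(aa + σ•(1:R)) = (1/(2*σ))•(σ•(1:R) - aa) := by
      rw [← e2]; abel
    rw [key]
    refine S.smul_nonneg _ (by positivity) _ (S.sub_mem (S.smul_mem _ S.one_mem) haa) ?_
    exact (S.le_iff_pos haa (S.smul_mem _ S.one_mem)).1 hub
  have ha₀ : ((1/(2*σ))•(aa + σ•(1:R)))*h = h*((1/(2*σ))•(aa + σ•(1:R))) :=
    main _ ha₀A ha₀pos ha₀le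
  have e3 : (2*σ)•((1/(2*σ))•(aa + σ•(1:R))) = aa + σ•(1:R) := by
    rw [smul_smul]
    have : (2*σ) * (1/(2*σ)) = 1 := by field_simp
    rw [this, one_smul]
  have e4 : aa = (2*σ)•((1/(2*σ))•(aa + σ•(1:R))) - σ•(1:R) := by
    rw [e3]; abel
  have hcomm1 : h*(σ•(1:R)) = (σ•(1:R))*h := by
    rw [mul_smul_comm, smul_mul_assoc, mul_one, one_mul]
  have hcomm2 : h*((2*σ)•((1/(2*σ))•(aa + σ•(1:R)))) = ((2*σ)•((1/(2*σ))•(aa + σ•(1:R))))*h := by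
    rw [mul_smul_comm, smul_mul_assoc, ha₀]
  rw [e4, mul_sub, sub_mul, hcomm1, hcomm2]

end SynapticAlgebra
/-- Theorem 7.5: for a centrally orthocomplete projection lattice `P` and
`h ∈ P`, the following are equivalent: (i) `h` is invariant (`h` and `h^⊥`
are unrelated); (ii) `sps ≤ h` for a symmetry `s` implies `p ≤ h`;
(iii) `p ≼ h` implies `p ≤ h`; (iv) `q ∧ h = 0` implies `q ⊥ h`;
(v) `h` is a central projection. -/
theorem stmt14 {R : Type*} [Ring R] [Algebra ℝ R] (S : SynapticAlgebra R)
    (hco : S.CentrallyOrthocomplete) (h : R) (hh : h ∈ S.Proj) :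
    List.TFAE [
      ¬ S.Related h (1 - h),
      ∀ p ∈ S.Proj, ∀ s : R, S.IsSymmetry s → S.le (s * p * s) h → S.le p h,
      ∀ p ∈ S.Proj, S.SubEquiv p h → S.le p h,
      ∀ q ∈ S.Proj, S.IsMeet q h 0 → q * h = 0,
      S.IsCentral h ] := by
  tfae_have 5 → 2 := by
    intro h5 p hpP s hs hle
    have hsh : s*h = h*s := (h5 s hs.1).symm
    have hshs : s*h*s = h := by rw [hsh, mul_assoc, hs.2, mul_one]
    have := S.conj_sym_mono hs (S.triple_mem hs.1 hpP.1) hh.1 hle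
    rwa [S.conj_sym_conj hs, hshs] at this
  tfae_have 2 → 3 := by
    intro h2 p hpP hsub
    obtain ⟨q₁, hq₁P, hq₁h, hequiv⟩ := hsub
    have key : ∀ x, S.Equiv x q₁ → x ∈ S.Proj → S.le x h := by
      intro x hx
      induction hx using Relation.ReflTransGen.head_induction_on with
      | refl => intro _; exact hq₁h
      | head h₁ h₂ ih =>
        intro haP
        obtain ⟨s, hs, he⟩ := h₁
        have hcP : _ ∈ S.Proj := he ▸ S.conj_sym_proj hs haP
        have hch := ih hcP
        rw [← he] at hch
        exact h2 _ haP s hs hch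
    exact key p hequiv hpP
  tfae_have 3 → 1 := by
    intro h3 hrel
    obtain ⟨p₁, hp₁, q₁, hq₁, hp₁0, hq₁0, hp₁h, hq₁h', hequiv⟩ := hrel
    have hsub : S.SubEquiv q₁ h := ⟨p₁, hp₁, hp₁h, S.equiv_symm hequiv⟩
    have hle := h3 q₁ hq₁ hsub
    exact hq₁0 (S.proj_eq_zero_of_le_both hq₁ hh hle hq₁h')
  tfae_have 1 → 4 := by
    intro h1 q hqP hmeet
    by_contra hqh
    obtain ⟨e, heP, g, hgP, he0, hg0, heq, hgh, hequiv⟩ :=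
      S.related_of_mul_ne_zero hqP hh hqh
    have hne : e*(1-h) ≠ 0 := by
      intro h0
      have h1h : (1:R) - h ∈ S.A := S.sub_mem S.one_mem hh.1
      have heh1 : e*h = e := by
        have : e*(1-h) = e - e*h := by noncomm_ring
        rw [this] at h0; exact (sub_eq_zero.mp h0).symm
      have h1he : (1-h)*e = 0 :=
        S.flip_zero heP.1 h1h (S.proj_pos (S.proj_compl hh)) h0
      have heh2 : h*e = e := by
        have : (1-h)*e = e - h*e := by noncomm_ring
        rw [this] at h1he; exact (sub_eq_zero.mp h1he).symm
      have hle_h : S.le e h := S.proj_le_of_mul heP hh heh1 heh2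
      have hle0 := hmeet.2.2.2 e heP heq hle_h
      exact he0 (S.le_antisymm e heP.1 0 S.zero_mem hle0 (S.proj_pos heP))
    obtain ⟨e', he'P, g', hg'P, he'0, hg'0, he'e, hg'c, hequiv'⟩ :=
      S.related_of_mul_ne_zero heP (S.proj_compl hh) hne
    obtain ⟨v, hvP, hvg, hequiv'', hvne⟩ := S.equiv_transport heP hequiv e' he'P he'e
    apply h1
    refine ⟨v, hvP, g', hg'P, hvne he'0, hg'0, ?_, hg'c, ?_⟩
    · exact S.le_trans v hvP.1 g hgP.1 h hh.1 hvg hgh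
    · exact Relation.ReflTransGen.trans (S.equiv_symm hequiv'') hequiv'
  tfae_have 4 → 5 := by
    intro h4
    refine S.central_of_proj_comm hh.1 ?_
    intro p hpP
    obtain ⟨e, heP, hep, heh, huniv⟩ := S.meet_spec hpP hh
    obtain ⟨hep1, hep2⟩ := S.mul_of_proj_le heP hpP hep
    obtain ⟨heh1, heh2⟩ := S.mul_of_proj_le heP hh heh
    have hq'P : p - e ∈ S.Proj :=
      ⟨S.sub_mem hpP.1 heP.1, by noncomm_ring [hpP.2, heP.2, hep1, hep2]⟩
    have hq'le : S.le (p-e) p := by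
      refine S.proj_le_of_mul hq'P hpP ?_ ?_
      · rw [sub_mul, hpP.2, hep1]
      · rw [mul_sub, hpP.2, hep2]
    have hmeet0 : S.IsMeet (p-e) h 0 := by
      refine ⟨S.zero_proj, S.proj_pos hq'P, S.proj_pos hh, ?_⟩
      intro r hrP hr1 hr2
      have hrp : S.le r p := S.le_trans r hrP.1 (p-e) hq'P.1 p hpP.1 hr1 hq'le
      have hre : S.le r e := huniv r hrP hrp hr2
      have m1 := (S.mul_of_proj_le hrP heP hre).1
      have m2 := (S.mul_of_proj_le hrP hq'P hr1).1
      have m3 := (S.mul_of_proj_le hrP hpP hrp).1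
      have hr0 : r = 0 := by
        have : r*(p-e) = r*p - r*e := by noncomm_ring
        rw [this, m3, m1, sub_self] at m2
        exact m2.symm
      rw [hr0]
      exact S.le_refl 0 S.zero_mem
    have hqh0 := h4 (p-e) hq'P hmeet0
    have hph : p*h = e := by
      have : (p-e)*h = p*h - e*h := by noncomm_ring
      rw [this, heh1] at hqh0
      have := sub_eq_zero.mp hqh0
      exact this
    have hhq0 : h*(p-e) = 0 :=
      S.flip_zero hq'P.1 hh.1 (S.proj_pos hh) hqh0
    have hhp : h*p = e := by
      have : h*(p-e) = h*p - h*e := by noncomm_ring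
      rw [this, heh2] at hhq0
      exact sub_eq_zero.mp hhq0
    rw [hph, hhp]
  tfae_finish
end

section
/- Let A be a synaptic algebra with projection lattice P that is centrally orthocomplete. If p ∈ P and c ∈ P ∩ C(A) is a central projection, then p and c are unrelated if and only if p ⊥ c. -/
section Aux

variable {R : Type*} [Ring R] [Algebra ℝ R] (S : SynapticAlgebra R)

lemma aux_neg_mem {a : R} (ha : a ∈ S.A) : -a ∈ S.A := by
  have := S.smul_mem (-1) ha
  rwa [neg_one_smul] at this

lemma aux_sub_mem {a b : R} (ha : a ∈ S.A) (hb : b ∈ S.A) : a - b ∈ S.A := by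
  have := S.add_mem ha (aux_neg_mem S hb)
  rwa [← sub_eq_add_neg] at this

lemma aux_mul_mem {a b : R} (ha : a ∈ S.A) (hb : b ∈ S.A) (h : a * b = b * a) :
    a * b ∈ S.A := by
  have key : (a + b) * (a + b) - a * a - b * b = a * b + a * b := by
    rw [mul_add, add_mul, add_mul, ← h]; abel
  have key2 : a * b = (2⁻¹ : ℝ) • ((a + b) * (a + b) - a * a - b * b) := by
    rw [key]
    rw [show a * b + a * b = (2 : ℝ) • (a * b) from (two_smul ℝ (a*b)).symm,
      smul_smul]
    norm_num
  rw [key2]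
  exact S.smul_mem _ (aux_sub_mem S (aux_sub_mem S
    (S.sq_mem _ (S.add_mem ha hb)) (S.sq_mem _ ha)) (S.sq_mem _ hb))

lemma aux_le_of_sub {a b : R} (ha : a ∈ S.A) (hb : b ∈ S.A)
    (h : S.le 0 (b - a)) : S.le a b := by
  have := S.add_le_add 0 S.zero_mem (b - a) (aux_sub_mem S hb ha) a ha h
  rwa [zero_add, sub_add_cancel] at this

lemma aux_sub_of_le {a b : R} (ha : a ∈ S.A) (hb : b ∈ S.A)
    (h : S.le a b) : S.le 0 (b - a) := by
  have := S.add_le_add a ha b hb (-a) (aux_neg_mem S ha) h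
  rwa [add_neg_cancel, ← sub_eq_add_neg] at this

lemma aux_eq_zero {x : R} (hx : x ∈ S.A) (h1 : S.le 0 x) (h2 : S.le 0 (-x)) :
    x = 0 := by
  have hx0 : S.le x 0 := by
    have := S.add_le_add 0 S.zero_mem (-x) (aux_neg_mem S hx) x hx h2
    rwa [zero_add, neg_add_cancel] at this
  exact S.le_antisymm x hx 0 S.zero_mem hx0 h1

lemma aux_proj_nonneg {q : R} (hq : q ∈ S.Proj) : S.le 0 q := by
  have := S.sq_nonneg q hq.1
  rwa [hq.2] at this

lemma aux_one_sub_proj {q : R} (hq : q ∈ S.Proj) : (1 - q) ∈ S.Proj := by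
  refine ⟨aux_sub_mem S S.one_mem hq.1, ?_⟩
  calc (1 - q) * (1 - q) = 1 - q - q + q * q := by noncomm_ring
    _ = 1 - q := by rw [hq.2]; abel

lemma aux_equiv_kill {c : R} (hcent : S.IsCentral c) {x y : R}
    (h : S.Equiv x y) (hx : c * x = 0) : c * y = 0 := by
  induction h with
  | refl => exact hx
  | tail _ step ih =>
    obtain ⟨s, hs, hsy⟩ := step
    rw [← hsy]
    have hcs : c * s = s * c := hcent s hs.1
    have key : ∀ m : R, c * m = 0 → c * (s * m * s) = 0 := by
      intro m hm
      have : c * (s * m * s) = s * (c * m) * s := by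
        simp only [← mul_assoc]
        rw [hcs]
      rw [this, hm, mul_zero, zero_mul]
    exact key _ ih

end Aux

/-- Corollary 7.6: for a centrally orthocomplete projection lattice `P`, a
projection `p` and a central projection `c` are unrelated iff `p ⊥ c`. -/
theorem stmt15 {R : Type*} [Ring R] [Algebra ℝ R] (S : SynapticAlgebra R)
    (hco : S.CentrallyOrthocomplete) (p c : R) (hp : p ∈ S.Proj)
    (hc : c ∈ S.Proj) (hcent : S.IsCentral c) :
    ¬ S.Related p c ↔ p * c = 0 := by
  have hpA : p ∈ S.A := hp.1
  have hcA : c ∈ S.A := hc.1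
  have hcp : c * p = p * c := hcent p hpA
  have h1c : (1 - c) ∈ S.Proj := aux_one_sub_proj S hc
  have h1p : (1 - p) ∈ S.Proj := aux_one_sub_proj S hp
  constructor
  · -- not related → p * c = 0
    intro hnr
    by_contra hpc
    apply hnr
    refine ⟨p * c, ?_, p * c, ?_, hpc, hpc, ?_, ?_, Relation.ReflTransGen.refl⟩
    · -- p * c ∈ Proj
      refine ⟨aux_mul_mem S hpA hcA hcp.symm, ?_⟩
      calc p * c * (p * c) = p * (c * p) * c := by noncomm_ring
        _ = p * p * (c * c) := by rw [hcp]; noncomm_ring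
        _ = p * c := by rw [hp.2, hc.2]
    · refine ⟨aux_mul_mem S hpA hcA hcp.symm, ?_⟩
      calc p * c * (p * c) = p * (c * p) * c := by noncomm_ring
        _ = p * p * (c * c) := by rw [hcp]; noncomm_ring
        _ = p * c := by rw [hp.2, hc.2]
    · -- p * c ≤ p
      apply aux_le_of_sub S (aux_mul_mem S hpA hcA hcp.symm) hpA
      have h3 : S.le 0 (p * (1 - c) * p) :=
        S.SA3 p hpA (1 - c) h1c.1 (aux_proj_nonneg S hp) (aux_proj_nonneg S h1c)
      have hid : p * (1 - c) * p = p - p * c := by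
        have h1 : p * c * p = p * c := by rw [mul_assoc, hcp, ← mul_assoc, hp.2]
        have h2 : p * (1 - c) * p = p * p - p * c * p := by noncomm_ring
        rw [h2, h1, hp.2]
      rwa [hid] at h3
    · -- p * c ≤ c
      apply aux_le_of_sub S (aux_mul_mem S hpA hcA hcp.symm) hcA
      have h3 : S.le 0 ((1 - p) * c * (1 - p)) :=
        S.SA3 (1 - p) h1p.1 c hcA (aux_proj_nonneg S h1p) (aux_proj_nonneg S hc)
      have hid : (1 - p) * c * (1 - p) = c - p * c := by
        have hcomm : c * (1 - p) = (1 - p) * c := hcent (1 - p) h1p.1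
        calc (1 - p) * c * (1 - p) = c * (1 - p) * (1 - p) := by rw [hcomm]
          _ = c * ((1 - p) * (1 - p)) := by rw [mul_assoc]
          _ = c * (1 - p) := by rw [h1p.2]
          _ = c - p * c := by rw [mul_sub, mul_one, hcp]
      rwa [hid] at h3
  · -- p * c = 0 → not related
    rintro hpc ⟨p₁, hp₁, q₁, hq₁, hp₁0, hq₁0, hle1, hle2, heq⟩
    have hcp₁ : c * p₁ = p₁ * c := hcent p₁ hp₁.1
    have hcq₁ : c * q₁ = q₁ * c := hcent q₁ hq₁.1
    -- Step A: p₁ * c = 0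
    have hstepA : p₁ * c = 0 := by
      have hmem : p₁ * c ∈ S.A := aux_mul_mem S hp₁.1 hcA hcp₁.symm
      have hpos : S.le 0 (p₁ * c) := by
        have h3 : S.le 0 (c * p₁ * c) :=
          S.SA3 c hcA p₁ hp₁.1 (aux_proj_nonneg S hc) (aux_proj_nonneg S hp₁)
        have hid : c * p₁ * c = p₁ * c := by
          rw [hcp₁, mul_assoc, hc.2]
        rwa [hid] at h3
      have hneg : S.le 0 (-(p₁ * c)) := by
        have h3 : S.le 0 (c * (p - p₁) * c) :=
          S.SA3 c hcA (p - p₁) (aux_sub_mem S hpA hp₁.1) (aux_proj_nonneg S hc)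
            (aux_sub_of_le S hp₁.1 hpA hle1)
        have hid : c * (p - p₁) * c = -(p₁ * c) := by
          have e1 : c * (p - p₁) * c = c * p * c - c * p₁ * c := by noncomm_ring
          have e2 : c * p * c = 0 := by
            rw [hcp, mul_assoc, hc.2, hpc]
          have e3 : c * p₁ * c = p₁ * c := by rw [hcp₁, mul_assoc, hc.2]
          rw [e1, e2, e3, zero_sub]
        rwa [hid] at h3
      exact aux_eq_zero S hmem hpos hneg
    -- Step B: q₁ * c = q₁
    have hstepB : q₁ * c = q₁ := by
      have hmem : q₁ * (1 - c) ∈ S.A :=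
        aux_mul_mem S hq₁.1 h1c.1 (by rw [mul_sub, sub_mul, mul_one, one_mul, hcq₁])
      have hcomm1 : (1 - c) * q₁ = q₁ * (1 - c) := by
        rw [mul_sub, sub_mul, mul_one, one_mul, hcq₁]
      have hpos : S.le 0 (q₁ * (1 - c)) := by
        have h3 : S.le 0 ((1 - c) * q₁ * (1 - c)) :=
          S.SA3 (1 - c) h1c.1 q₁ hq₁.1 (aux_proj_nonneg S h1c) (aux_proj_nonneg S hq₁)
        have hid : (1 - c) * q₁ * (1 - c) = q₁ * (1 - c) := by
          rw [hcomm1, mul_assoc, h1c.2]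
        rwa [hid] at h3
      have hneg : S.le 0 (-(q₁ * (1 - c))) := by
        have h3 : S.le 0 ((1 - c) * (c - q₁) * (1 - c)) :=
          S.SA3 (1 - c) h1c.1 (c - q₁) (aux_sub_mem S hcA hq₁.1)
            (aux_proj_nonneg S h1c) (aux_sub_of_le S hq₁.1 hcA hle2)
        have hid : (1 - c) * (c - q₁) * (1 - c) = -(q₁ * (1 - c)) := by
          have e1 : (1 - c) * (c - q₁) * (1 - c)
              = (1 - c) * c * (1 - c) - (1 - c) * q₁ * (1 - c) := by noncomm_ring
          have e2 : (1 - c) * c * (1 - c) = 0 := by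
            rw [sub_mul, one_mul, hc.2, sub_self, zero_mul]
          have e3 : (1 - c) * q₁ * (1 - c) = q₁ * (1 - c) := by
            rw [hcomm1, mul_assoc, h1c.2]
          rw [e1, e2, e3, zero_sub]
        rwa [hid] at h3
      have : q₁ * (1 - c) = 0 := aux_eq_zero S hmem hpos hneg
      rw [mul_sub, mul_one] at this
      rw [← sub_eq_zero]
      rw [← neg_sub, this, neg_zero]
    -- Step C
    have hkill : c * q₁ = 0 := aux_equiv_kill S hcent heq (by rw [hcp₁, hstepA])
    rw [hcq₁, hstepB] at hkill
    exact hq₁0 hkill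
end
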